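/- arXiv:1510.05608 — 14 statements merged into one kernel-verified Lean document; each statement's English description precedes it below -/
import Mathlib

section
/- Let A be a Banach algebra whose character space consists of exactly two distinct nonzero characters φ and ψ. Then A is Δ-weak φ-amenable. (Concretely: since characters are linearly independent, there exists a₀ ∈ A with φ(a₀) = 0 and ψ(a₀) = 1, and the evaluation functional m = â₀ ∈ A** satisfies m(φ) = 0 and m(ψ·a) = ψ(a) for all a ∈ A.) -/
open Filter Topology

section Defs

variable (A : Type*) [NonUnitalNormedRing A] [NormedSpace ℂ A]
  [IsScalarTower ℂ A A] [SMulCommClass ℂ A A]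

/-- `φ` is a nonzero (continuous, multiplicative, linear) character on `A`. -/
def IsChar (φ : A →L[ℂ] ℂ) : Prop :=
  φ ≠ 0 ∧ ∀ a b : A, φ (a * b) = φ a * φ b

/-- The action `f · a` of `A` on `A*`: `(f·a)(b) = f (a*b)`. -/
noncomputable def dualAct (f : A →L[ℂ] ℂ) (a : A) : A →L[ℂ] ℂ :=
  f.comp (ContinuousLinearMap.mul ℂ A a)

/-- `A` is Δ-weak `φ`-amenable. -/
def DeltaWeakAmenable (φ : A →L[ℂ] ℂ) : Prop :=
  ∃ m : (A →L[ℂ] ℂ) →L[ℂ] ℂ, m φ = 0 ∧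
    ∀ (a : A) (ψ : A →L[ℂ] ℂ), IsChar A ψ → ψ ≠ φ → m (dualAct A ψ a) = ψ a

/-- `A` is Δ-weak character amenable. -/
def DeltaWeakCharAmenable : Prop :=
  ∀ φ : A →L[ℂ] ℂ, (IsChar A φ ∨ φ = 0) → DeltaWeakAmenable A φ

/-- `u` is a Δ-weak approximate identity for `A` (along the filter `l`). -/
def DeltaWeakApproxIdentity {ι : Type*} (l : Filter ι) (u : ι → A) : Prop :=
  ∀ (a : A) (φ : A →L[ℂ] ℂ), IsChar A φ →
    Tendsto (fun i => φ (a * u i)) l (𝓝 (φ a))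

end Defs

/-- if `Δ(A) = {φ, ψ}` with `φ ≠ ψ`, then `A` is Δ-weak `φ`-amenable. -/
theorem deltaWeakAmenable_of_two_characters
    (A : Type*) [NonUnitalNormedRing A] [NormedSpace ℂ A]
    [IsScalarTower ℂ A A] [SMulCommClass ℂ A A] [CompleteSpace A]
    (φ ψ : A →L[ℂ] ℂ) (hφ : IsChar A φ) (hψ : IsChar A ψ) (hne : φ ≠ ψ)
    (hchars : ∀ χ : A →L[ℂ] ℂ, IsChar A χ → χ = φ ∨ χ = ψ) :
    DeltaWeakAmenable A φ := by
  -- find b with φ b ≠ ψ b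
  obtain ⟨b, hb⟩ : ∃ b, φ b ≠ ψ b := by
    by_contra h
    push_neg at h
    exact hne (ContinuousLinearMap.ext h)
  -- find x with ψ x ≠ 0
  obtain ⟨x, hx⟩ : ∃ x, ψ x ≠ 0 := by
    by_contra h
    push_neg at h
    exact hψ.1 (ContinuousLinearMap.ext h)
  set c : ℂ := ψ x * (ψ b - φ b) with hc
  have hcne : c ≠ 0 := mul_ne_zero hx (sub_ne_zero.mpr (Ne.symm hb))
  set a₀ : A := c⁻¹ • (x * b - φ b • x) with ha₀
  have hφa₀ : φ a₀ = 0 := by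
    simp [ha₀, hφ.2, mul_comm]
  have hψa₀ : ψ a₀ = 1 := by
    have : ψ (x * b - φ b • x) = c := by
      simp [hψ.2, hc]; ring
    simp [ha₀, this, inv_mul_cancel₀ hcne]
  refine ⟨(ContinuousLinearMap.apply ℂ ℂ) a₀, hφa₀, ?_⟩
  intro a χ hχ hχφ
  have hχψ : χ = ψ := (hchars χ hχ).resolve_left hχφ
  subst hχψ
  simp [dualAct, hψ.2, hψa₀]
end

section
/- Let A be a Banach algebra, φ ∈ Δ(A) ∪ {0}, and suppose ker(φ) has a bounded right approximate identity (e_α). If there exists a₀ ∈ A with φ(a₀) = 1 such that lim_α |ψ(a₀ e_α) − ψ(a₀)| = 0 for every ψ ∈ Δ(A) with ψ ≠ φ, then A is Δ-weak φ-amenable. -/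
open Filter Topology

/-- if `ker φ` has a bounded right approximate identity `(e_i)` and there is
`a₀ ∈ A` with `φ a₀ = 1` and `ψ (a₀ * e_i) → ψ a₀` for every character `ψ ≠ φ`, then `A`
is Δ-weak `φ`-amenable. -/
theorem deltaWeakAmenable_of_boundedRightApproxId
    (A : Type*) [NonUnitalNormedRing A] [NormedSpace ℂ A]
    [IsScalarTower ℂ A A] [SMulCommClass ℂ A A] [CompleteSpace A]
    (φ : A →L[ℂ] ℂ) (hφ : IsChar A φ ∨ φ = 0)
    {ι : Type*} (l : Filter ι) (hl : l.NeBot) (e : ι → A)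
    (he_ker : ∀ i, φ (e i) = 0)
    (he_bdd : ∃ M : ℝ, ∀ i, ‖e i‖ ≤ M)
    (he_rai : ∀ x : A, φ x = 0 → Tendsto (fun i => ‖x * e i - x‖) l (𝓝 0))
    (ha₀ : ∃ a₀ : A, φ a₀ = 1 ∧ ∀ ψ : A →L[ℂ] ℂ, IsChar A ψ → ψ ≠ φ →
      Tendsto (fun i => ψ (a₀ * e i)) l (𝓝 (ψ a₀))) :
    DeltaWeakAmenable A φ := by
  classical
  obtain ⟨a₀, ha1, ha2⟩ := ha₀
  obtain ⟨M, hM⟩ := he_bdd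
  obtain ⟨u, hu⟩ := Ultrafilter.exists_le l
  set M' : ℝ := max M 0 with hM'
  have hM'e : ∀ i, ‖e i‖ ≤ M' := fun i => (hM i).trans (le_max_left _ _)
  -- every functional has a limit along u on the bounded net e
  have key : ∀ f : A →L[ℂ] ℂ, ∃ c : ℂ, Tendsto (fun i => f (e i)) ↑u (𝓝 c) := by
    intro f
    have hcomp : IsCompact (Metric.closedBall (0:ℂ) (‖f‖ * M')) :=
      isCompact_closedBall _ _
    have hmem : ∀ i, f (e i) ∈ Metric.closedBall (0:ℂ) (‖f‖ * M') := by
      intro i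
      rw [Metric.mem_closedBall, dist_zero_right]
      exact (f.le_opNorm (e i)).trans
        (mul_le_mul_of_nonneg_left (hM'e i) (norm_nonneg f))
    obtain ⟨c, -, hc⟩ := hcomp.ultrafilter_le_nhds (u.map fun i => f (e i))
      (Filter.le_principal_iff.mpr (Filter.mem_map.mpr (Filter.univ_mem' hmem)))
    exact ⟨c, hc⟩
  set L : (A →L[ℂ] ℂ) → ℂ := fun f => limUnder ↑u (fun i => f (e i)) with hL
  have hLt : ∀ f : A →L[ℂ] ℂ, Tendsto (fun i => f (e i)) ↑u (𝓝 (L f)) := by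
    intro f
    obtain ⟨c, hc⟩ := key f
    have : L f = c := hc.limUnder_eq
    rw [this]; exact hc
  have hLeq : ∀ (f : A →L[ℂ] ℂ) (c : ℂ),
      Tendsto (fun i => f (e i)) ↑u (𝓝 c) → L f = c := fun f c hc => hc.limUnder_eq
  have hadd : ∀ f g : A →L[ℂ] ℂ, L (f + g) = L f + L g := by
    intro f g
    exact hLeq _ _ (by simpa using (hLt f).add (hLt g))
  have hsmul : ∀ (c : ℂ) (f : A →L[ℂ] ℂ), L (c • f) = c • L f := by
    intro c f
    exact hLeq _ _ (by simpa using (hLt f).const_mul c)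
  have hbound : ∀ f : A →L[ℂ] ℂ, ‖L f‖ ≤ M' * ‖f‖ := by
    intro f
    have h1 : Tendsto (fun i => ‖f (e i)‖) ↑u (𝓝 ‖L f‖) := (hLt f).norm
    refine le_of_tendsto h1 (Filter.Eventually.of_forall fun i => ?_)
    calc ‖f (e i)‖ ≤ ‖f‖ * ‖e i‖ := f.le_opNorm _
      _ ≤ ‖f‖ * M' := mul_le_mul_of_nonneg_left (hM'e i) (norm_nonneg f)
      _ = M' * ‖f‖ := mul_comm _ _
  let m : (A →L[ℂ] ℂ) →L[ℂ] ℂ :=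
    LinearMap.mkContinuous
      { toFun := L, map_add' := hadd, map_smul' := hsmul } M' hbound
  have hmapp : ∀ f, m f = L f := fun f => rfl
  refine ⟨m, ?_, ?_⟩
  · rw [hmapp]
    refine hLeq _ _ ?_
    simp only [he_ker]; exact (tendsto_const_nhds : Tendsto (fun _ : ι => (0:ℂ)) ↑u (𝓝 0))
  · intro a ψ hψ hne
    rw [hmapp]
    refine hLeq _ _ ?_
    have hx0 : φ (a - φ a • a₀) = 0 := by
      simp [ha1]
    have hx : Tendsto (fun i => ‖(a - φ a • a₀) * e i - (a - φ a • a₀)‖) ↑u (𝓝 0) :=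
      (he_rai _ hx0).mono_left hu
    have hxA : Tendsto (fun i => (a - φ a • a₀) * e i) ↑u (𝓝 (a - φ a • a₀)) := by
      rw [tendsto_iff_norm_sub_tendsto_zero]; exact hx
    have hψx : Tendsto (fun i => ψ ((a - φ a • a₀) * e i)) ↑u (𝓝 (ψ (a - φ a • a₀))) :=
      (ψ.continuous.tendsto _).comp hxA
    have hψa₀ : Tendsto (fun i => ψ (a₀ * e i)) ↑u (𝓝 (ψ a₀)) :=
      (ha2 ψ hψ hne).mono_left hu
    have hsum : Tendsto (fun i => ψ ((a - φ a • a₀) * e i) + φ a * ψ (a₀ * e i)) ↑u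
        (𝓝 (ψ (a - φ a • a₀) + φ a * ψ a₀)) := hψx.add (hψa₀.const_mul _)
    have heq : ∀ i, (dualAct A ψ a) (e i) =
        ψ ((a - φ a • a₀) * e i) + φ a * ψ (a₀ * e i) := by
      intro i
      have : a * e i = (a - φ a • a₀) * e i + φ a • (a₀ * e i) := by
        rw [sub_mul, smul_mul_assoc, sub_add_cancel]
      simp [dualAct, this, smul_eq_mul]
    have hval : ψ (a - φ a • a₀) + φ a * ψ a₀ = ψ a := by
      simp [smul_eq_mul]
    rw [show (fun i => (dualAct A ψ a) (e i)) =
        (fun i => ψ ((a - φ a • a₀) * e i) + φ a * ψ (a₀ * e i)) from funext heq, ← hval]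
    exact hsum
end

section
/- Let A be a Banach algebra and φ ∈ Δ(A) ∪ {0}. Then A is Δ-weak φ-amenable if and only if there exists a bounded net (a_α) contained in ker(φ) such that |ψ(a a_α) − ψ(a)| → 0 for every a ∈ A and every ψ ∈ Δ(A) with ψ ≠ φ (that is, ker(φ) contains a bounded Δ-weak approximate identity for A relative to the characters other than φ). -/
open Filter Topology

section Aux

variable {A : Type*} [NonUnitalNormedRing A] [NormedSpace ℂ A]
  [IsScalarTower ℂ A A] [SMulCommClass ℂ A A]

lemma dualAct_apply (ψ : A →L[ℂ] ℂ) (a b : A) : dualAct A ψ a b = ψ (a * b) := rfl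

lemma IsChar.exists_ne_zero {ψ : A →L[ℂ] ℂ} (hψ : IsChar A ψ) : ∃ a, ψ a ≠ 0 := by
  by_contra h
  push_neg at h
  exact hψ.1 (ContinuousLinearMap.ext fun a => by simp [h a])

lemma dualAct_char {ψ : A →L[ℂ] ℂ} (hψ : ∀ a b, ψ (a * b) = ψ a * ψ b) (a : A) :
    dualAct A ψ a = ψ a • ψ :=
  ContinuousLinearMap.ext fun b => by
    simp [dualAct_apply, hψ a b]

lemma artin_aux (s : Finset (A →L[ℂ] ℂ)) (hs : ∀ f ∈ s, IsChar A f)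
    (c : (A →L[ℂ] ℂ) → ℂ) (h : ∀ x, ∑ f ∈ s, c f * f x = 0) :
    ∀ f ∈ s, c f = 0 := by
  classical
  induction s using Finset.induction_on generalizing c with
  | empty => simp
  | @insert f₀ t hf₀ ih =>
    have hst : ∀ f ∈ t, IsChar A f := fun f hf => hs f (Finset.mem_insert_of_mem hf)
    have key : ∀ f ∈ t, c f = 0 := by
      intro f hf
      have hne : f ≠ f₀ := fun hh => hf₀ (hh ▸ hf)
      obtain ⟨a, ha⟩ : ∃ a, f a ≠ f₀ a := by
        by_contra hc; push_neg at hc; exact hne (ContinuousLinearMap.ext hc)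
      have h2 : ∀ x, ∑ g ∈ t, (c g * (g a - f₀ a)) * g x = 0 := by
        intro x
        have e1 := h (a * x)
        have e2 := h x
        rw [Finset.sum_insert hf₀] at e1 e2
        have hsum : ∑ g ∈ t, (c g * (g a - f₀ a)) * g x
            = (∑ g ∈ t, c g * g (a * x)) - f₀ a * ∑ g ∈ t, c g * g x := by
          rw [Finset.mul_sum, ← Finset.sum_sub_distrib]
          refine Finset.sum_congr rfl fun g hg => ?_
          rw [(hst g hg).2 a x]; ring
        have hf₀m := (hs f₀ (Finset.mem_insert_self f₀ t)).2 a x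
        rw [hsum]
        linear_combination e1 - f₀ a * e2 - c f₀ * hf₀m
      have := ih hst _ h2 f hf
      rcases mul_eq_zero.1 this with h' | h'
      · exact h'
      · exact absurd (sub_eq_zero.1 h') ha
    intro f hf
    rcases Finset.mem_insert.1 hf with rfl | hf'
    · obtain ⟨a, ha⟩ := IsChar.exists_ne_zero (hs f (Finset.mem_insert_self f t))
      have hx : c f * f a = 0 := by
        have h3 := h a
        rw [Finset.sum_insert hf₀] at h3
        have h4 : ∑ g ∈ t, c g * g a = 0 :=
          Finset.sum_eq_zero fun g hg => by rw [key g hg, zero_mul]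
        linear_combination h3 - h4
      exact (mul_eq_zero.1 hx).resolve_right ha
    · exact key f hf'

lemma char_interpolate (s : Finset (A →L[ℂ] ℂ)) (hs : ∀ f ∈ s, IsChar A f)
    (c : (A →L[ℂ] ℂ) → ℂ) : ∃ x : A, ∀ f ∈ s, f x = c f := by
  classical
  set T : A →ₗ[ℂ] (↥s → ℂ) :=
    LinearMap.pi (fun f : ↥s => ((f : A →L[ℂ] ℂ) : A →ₗ[ℂ] ℂ)) with hT
  have hrange : LinearMap.range T = ⊤ := by
    by_contra hne
    obtain ⟨φg, hφne, hφ⟩ := Submodule.exists_dual_map_eq_bot_of_lt_top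
      (lt_top_iff_ne_top.2 hne) inferInstance
    have hzero : ∀ x : A, ∑ f ∈ s,
        (fun g => if hg : g ∈ s then φg (fun j => if (⟨g, hg⟩ : ↥s) = j then 1 else 0) else 0) f
          * f x = 0 := by
      intro x
      have hmem : φg (T x) = 0 := by
        have hmm : φg (T x) ∈ Submodule.map φg (LinearMap.range T) :=
          Submodule.mem_map_of_mem (LinearMap.mem_range_self T x)
        rw [hφ] at hmm
        exact (Submodule.mem_bot ℂ).1 hmm
      calc ∑ f ∈ s, (fun g => if hg : g ∈ s then
              φg (fun j => if (⟨g, hg⟩ : ↥s) = j then 1 else 0) else 0) f * f x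
          = ∑ g : ↥s, (fun g' => if hg : g' ∈ s then
              φg (fun j => if (⟨g', hg⟩ : ↥s) = j then 1 else 0) else 0) (g : A →L[ℂ] ℂ)
              * (g : A →L[ℂ] ℂ) x :=
            (Finset.sum_coe_sort s _).symm
        _ = ∑ g : ↥s, (T x) g • φg (fun j => if g = j then 1 else 0) := by
            refine Finset.sum_congr rfl fun g _ => ?_
            simp only [dif_pos g.2, Subtype.coe_eta]
            simp [hT, smul_eq_mul, mul_comm]
        _ = φg (T x) := (LinearMap.pi_apply_eq_sum_univ φg (T x)).symm
        _ = 0 := hmem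
    have hall := artin_aux s hs _ hzero
    apply hφne
    apply LinearMap.ext
    intro v
    rw [LinearMap.pi_apply_eq_sum_univ φg v]
    have hlam0 : ∀ k : ↥s, φg (fun j => if k = j then 1 else 0) = 0 := by
      intro k
      have hk := hall k.1 k.2
      simp only [dif_pos k.2, Subtype.coe_eta] at hk
      exact hk
    simp only [LinearMap.zero_apply]
    exact Finset.sum_eq_zero fun k _ => by rw [hlam0 k, smul_zero]
  have hmem : (fun f : ↥s => c f.1) ∈ LinearMap.range T := by rw [hrange]; trivial
  obtain ⟨x, hx⟩ := hmem
  refine ⟨x, fun f hf => ?_⟩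
  have := congrFun hx ⟨f, hf⟩
  simpa [hT] using this

lemma helly_char (m : (A →L[ℂ] ℂ) →L[ℂ] ℂ) (s : Finset (A →L[ℂ] ℂ))
    (hs : ∀ f ∈ s, IsChar A f) {ε : ℝ} (hε : 0 < ε) :
    ∃ x : A, ‖x‖ ≤ ‖m‖ + ε ∧ ∀ f ∈ s, f x = m f := by
  classical
  obtain ⟨x₀, hx₀⟩ := char_interpolate s hs (fun f => m f)
  set N : Submodule ℂ A :=
    ⨅ f : ↥s, LinearMap.ker ((f : A →L[ℂ] ℂ) : A →ₗ[ℂ] ℂ) with hN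
  have hNmem : ∀ x : A, x ∈ N ↔ ∀ f ∈ s, f x = 0 := by
    intro x
    simp only [hN, Submodule.mem_iInf, LinearMap.mem_ker, Subtype.forall]
    rfl
  haveI hNc : IsClosed (N : Set A) := by
    have hco : (N : Set A) =
        ⋂ f : ↥s, (LinearMap.ker ((f : A →L[ℂ] ℂ) : A →ₗ[ℂ] ℂ) : Set A) := by
      rw [hN, Submodule.coe_iInf]
    rw [hco]
    exact isClosed_iInter fun f => ContinuousLinearMap.isClosed_ker (f : A →L[ℂ] ℂ)
  have key : ‖(Submodule.Quotient.mk x₀ : A ⧸ N)‖ ≤ ‖m‖ := by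
    by_cases h0 : (Submodule.Quotient.mk x₀ : A ⧸ N) = 0
    · rw [h0, norm_zero]; exact norm_nonneg m
    · obtain ⟨g, hg1, hgx⟩ := exists_dual_vector ℂ _ (norm_ne_zero_iff.2 h0)
      have hmkb : ∀ x : A, ‖N.mkQ x‖ ≤ 1 * ‖x‖ := fun x => by
        simpa using Submodule.Quotient.norm_mk_le N x
      set Q : A →L[ℂ] (A ⧸ N) := LinearMap.mkContinuous N.mkQ 1 hmkb with hQ
      set F : A →L[ℂ] ℂ := g.comp Q with hF
      have hQnorm : ‖Q‖ ≤ 1 := LinearMap.mkContinuous_norm_le _ zero_le_one _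
      have hFnorm : ‖F‖ ≤ 1 := by
        calc ‖F‖ ≤ ‖g‖ * ‖Q‖ := ContinuousLinearMap.opNorm_comp_le _ _
          _ ≤ 1 * 1 := by rw [hg1]; exact mul_le_mul_of_nonneg_left hQnorm zero_le_one
          _ = 1 := one_mul 1
      have hker : (⨅ f : ↥s, LinearMap.ker ((f : A →L[ℂ] ℂ) : A →ₗ[ℂ] ℂ))
          ≤ LinearMap.ker (F : A →ₗ[ℂ] ℂ) := by
        intro x hx
        have hxN : x ∈ N := by rw [hN]; exact hx
        have hq : N.mkQ x = 0 := by
          rw [Submodule.mkQ_apply, Submodule.Quotient.mk_eq_zero]; exact hxN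
        have : F x = 0 := by
          rw [hF]
          show g (Q x) = 0
          have : Q x = N.mkQ x := rfl
          rw [this, hq, map_zero]
        simpa [LinearMap.mem_ker] using this
      have hspan := mem_span_of_iInf_ker_le_ker
        (L := fun f : ↥s => ((f : A →L[ℂ] ℂ) : A →ₗ[ℂ] ℂ)) (K := (F : A →ₗ[ℂ] ℂ)) hker
      rw [Submodule.mem_span_range_iff_exists_fun ℂ] at hspan
      obtain ⟨cc, hcc⟩ := hspan
      have hFsum : F = ∑ k : ↥s, cc k • (k : A →L[ℂ] ℂ) := by
        ext x
        have hx := LinearMap.congr_fun hcc x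
        simp only [LinearMap.coe_sum, Finset.sum_apply, LinearMap.smul_apply,
          ContinuousLinearMap.coe_coe, smul_eq_mul] at hx
        simp only [ContinuousLinearMap.coe_sum', Finset.sum_apply,
          ContinuousLinearMap.coe_smul', Pi.smul_apply, smul_eq_mul]
        exact hx.symm
      have hmF : m F = ∑ k : ↥s, cc k * m (k : A →L[ℂ] ℂ) := by
        rw [hFsum, map_sum]
        exact Finset.sum_congr rfl fun k _ => by rw [map_smul, smul_eq_mul]
      have hFx₀ : F x₀ = ∑ k : ↥s, cc k * (k : A →L[ℂ] ℂ) x₀ := by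
        rw [hFsum]
        simp [ContinuousLinearMap.coe_sum', smul_eq_mul]
      have hFm : F x₀ = m F := by
        rw [hmF, hFx₀]
        exact Finset.sum_congr rfl fun k _ => by rw [hx₀ k.1 k.2]
      have hFval : F x₀ = (‖(Submodule.Quotient.mk x₀ : A ⧸ N)‖ : ℂ) := by
        rw [hF]
        show g (Q x₀) = _
        have : Q x₀ = Submodule.Quotient.mk x₀ := rfl
        rw [this, hgx]; norm_cast
      have hnb : ‖m F‖ ≤ ‖m‖ := by
        calc ‖m F‖ ≤ ‖m‖ * ‖F‖ := m.le_opNorm F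
          _ ≤ ‖m‖ * 1 := mul_le_mul_of_nonneg_left hFnorm (norm_nonneg m)
          _ = ‖m‖ := mul_one _
      have : ‖((‖(Submodule.Quotient.mk x₀ : A ⧸ N)‖ : ℝ) : ℂ)‖ ≤ ‖m‖ := by
        rw [← hFval, hFm]; exact hnb
      rwa [Complex.norm_real, Real.norm_eq_abs, abs_of_nonneg (norm_nonneg _)] at this
  obtain ⟨x, hxq, hxn⟩ := Submodule.Quotient.norm_mk_lt
    (Submodule.Quotient.mk x₀ : A ⧸ N) hε
  refine ⟨x, by linarith, fun f hf => ?_⟩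
  have hsub : x - x₀ ∈ N := (Submodule.Quotient.eq N).1 hxq
  have hfz : f (x - x₀) = 0 := (hNmem _).1 hsub f hf
  have : f x - f x₀ = 0 := by rw [← map_sub]; exact hfz
  rw [sub_eq_zero.1 this, hx₀ f hf]

end Aux

universe u

/-- `A` is Δ-weak `φ`-amenable iff `ker φ` contains a bounded Δ-weak
approximate identity for `A` relative to the characters other than `φ`. -/
theorem deltaWeakAmenable_iff_boundedDeltaWeakApproxId
    (A : Type u) [NonUnitalNormedRing A] [NormedSpace ℂ A]
    [IsScalarTower ℂ A A] [SMulCommClass ℂ A A] [CompleteSpace A]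
    (φ : A →L[ℂ] ℂ) (hφ : IsChar A φ ∨ φ = 0) :
    DeltaWeakAmenable A φ ↔
      ∃ (ι : Type u) (l : Filter ι), l.NeBot ∧ ∃ e : ι → A,
        (∃ M : ℝ, ∀ i, ‖e i‖ ≤ M) ∧ (∀ i, φ (e i) = 0) ∧
        ∀ (a : A) (ψ : A →L[ℂ] ℂ), IsChar A ψ → ψ ≠ φ →
          Tendsto (fun i => ψ (a * e i)) l (𝓝 (ψ a)) := by
  constructor
  · -- Forward: amenability gives a bounded net in ker φ
    rintro ⟨m, hm0, hm⟩
    classical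
    have hmψ : ∀ ψ : A →L[ℂ] ℂ, IsChar A ψ → ψ ≠ φ → m ψ = 1 := by
      intro ψ hψ hne
      obtain ⟨a, ha⟩ := hψ.exists_ne_zero
      have h1 := hm a ψ hψ hne
      rw [dualAct_char hψ.2 a, map_smul, smul_eq_mul] at h1
      exact mul_left_cancel₀ ha (h1.trans (mul_one (ψ a)).symm)
    set Mb : ℝ := ‖m‖ + 1 with hMb
    let ι' : Type u := {x : A // φ x = 0 ∧ ‖x‖ ≤ Mb}
    let Sf : Finset (A →L[ℂ] ℂ) → Set ι' :=
      fun F => {x : ι' | ∀ ψ ∈ F, IsChar A ψ → ψ ≠ φ → ψ x.1 = 1}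
    let l : Filter ι' := ⨅ F : Finset (A →L[ℂ] ℂ), 𝓟 (Sf F)
    have hne : ∀ F : Finset (A →L[ℂ] ℂ), ∃ x : ι', x ∈ Sf F := by
      intro F
      set s₁ : Finset (A →L[ℂ] ℂ) := F.filter (fun ψ => IsChar A ψ ∧ ψ ≠ φ) with hs₁
      set s₂ : Finset (A →L[ℂ] ℂ) := if IsChar A φ then insert φ s₁ else s₁ with hs₂
      have hs₂c : ∀ f ∈ s₂, IsChar A f := by
        intro f hf
        by_cases hc : IsChar A φ
        · rw [hs₂, if_pos hc] at hf
          rcases Finset.mem_insert.1 hf with rfl | hf'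
          · exact hc
          · exact ((Finset.mem_filter.1 hf').2).1
        · rw [hs₂, if_neg hc] at hf
          exact ((Finset.mem_filter.1 hf).2).1
      obtain ⟨x, hxn, hxv⟩ := helly_char m s₂ hs₂c one_pos
      have hxφ : φ x = 0 := by
        by_cases hc : IsChar A φ
        · have hmem : φ ∈ s₂ := by rw [hs₂, if_pos hc]; exact Finset.mem_insert_self _ _
          rw [hxv φ hmem, hm0]
        · rcases hφ with h | h
          · exact absurd h hc
          · rw [h]; rfl
      refine ⟨⟨x, hxφ, by rw [hMb]; exact hxn⟩, ?_⟩
      intro ψ hψF hψc hψne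
      have hψs : ψ ∈ s₂ := by
        have h1 : ψ ∈ s₁ := Finset.mem_filter.2 ⟨hψF, hψc, hψne⟩
        by_cases hc : IsChar A φ
        · rw [hs₂, if_pos hc]; exact Finset.mem_insert_of_mem h1
        · rwa [hs₂, if_neg hc]
      show ψ x = 1
      rw [hxv ψ hψs, hmψ ψ hψc hψne]
    haveI : Nonempty ι' := ⟨(hne ∅).choose⟩
    have hlne : l.NeBot := by
      apply Filter.iInf_neBot_of_directed
      · intro F G
        refine ⟨F ∪ G, Filter.principal_mono.2 ?_, Filter.principal_mono.2 ?_⟩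
        · intro x hx ψ hψ hc hn
          exact hx ψ (Finset.mem_union_left G hψ) hc hn
        · intro x hx ψ hψ hc hn
          exact hx ψ (Finset.mem_union_right F hψ) hc hn
      · intro F
        exact Filter.principal_neBot_iff.2 (hne F)
    refine ⟨ι', l, hlne, Subtype.val, ⟨Mb, fun i => i.2.2⟩, fun i => i.2.1, ?_⟩
    intro a ψ hψc hψne
    have hmem : Sf {ψ} ∈ l :=
      (iInf_le (fun F => 𝓟 (Sf F)) ({ψ} : Finset (A →L[ℂ] ℂ)))
        (Filter.mem_principal_self _)
    have hev : (fun x : ι' => ψ (a * x.1)) =ᶠ[l] (fun _ => ψ a) := by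
      filter_upwards [hmem] with x hx
      have h1 : ψ x.1 = 1 := hx ψ (Finset.mem_singleton_self ψ) hψc hψne
      rw [hψc.2 a x.1, h1, mul_one]
    exact Tendsto.congr' hev.symm tendsto_const_nhds
  · -- Reverse: Banach–Alaoglu
    rintro ⟨ι, l, hl, e, ⟨M, hM⟩, he0, hconv⟩
    haveI := hl
    set J := NormedSpace.inclusionInDoubleDual ℂ A with hJ
    let g : ι → WeakDual ℂ (A →L[ℂ] ℂ) := fun i => StrongDual.toWeakDual (J (e i))
    set K : Set (WeakDual ℂ (A →L[ℂ] ℂ)) :=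
      WeakDual.toStrongDual ⁻¹' Metric.closedBall 0 (max M 0) with hK
    have hgK : ∀ i, g i ∈ K := by
      intro i
      simp only [hK, Set.mem_preimage, Metric.mem_closedBall, dist_zero_right]
      calc dist (WeakDual.toStrongDual (g i)) 0 = ‖J (e i)‖ := by exact dist_zero_right (J (e i))
        _ ≤ ‖e i‖ := NormedSpace.double_dual_bound ℂ A (e i)
        _ ≤ M := hM i
        _ ≤ max M 0 := le_max_left _ _
    let U : Ultrafilter ι := Ultrafilter.of l
    have hU : ↑U ≤ l := Ultrafilter.of_le l
    have hUP : ↑(U.map g) ≤ 𝓟 K := by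
      rw [Ultrafilter.coe_map, Filter.le_principal_iff]
      exact Filter.mem_map.2 (Filter.univ_mem' hgK)
    obtain ⟨m', hm'K, hm'⟩ :=
      (WeakDual.isCompact_closedBall 0 (max M 0)).ultrafilter_le_nhds (U.map g) hUP
    have hTg : Tendsto g ↑U (𝓝 m') := by
      rwa [Filter.Tendsto, ← Ultrafilter.coe_map]
    have htend : ∀ f : A →L[ℂ] ℂ, Tendsto (fun i => f (e i)) ↑U (𝓝 (m' f)) := by
      intro f
      exact ((WeakDual.eval_continuous f).tendsto m').comp hTg
    refine ⟨WeakDual.toStrongDual m', ?_, ?_⟩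
    · have h1 := htend φ
      have h2 : Tendsto (fun i => φ (e i)) ↑U (𝓝 0) := by
        simp only [he0]
        exact tendsto_const_nhds
      exact tendsto_nhds_unique h1 h2
    · intro a ψ hψc hψne
      have h1 := htend (dualAct A ψ a)
      have h1' : Tendsto (fun i => ψ (a * e i)) ↑U (𝓝 (m' (dualAct A ψ a))) := h1
      have h2 : Tendsto (fun i => ψ (a * e i)) ↑U (𝓝 (ψ a)) :=
        (hconv a ψ hψc hψne).mono_left hU
      exact tendsto_nhds_unique h1' h2
end

section
/- Let A and B be Banach algebras, φ ∈ Δ(A) ∪ {0} and ψ ∈ Δ(B) ∪ {0}. If A is Δ-weak φ-amenable and B is Δ-weak ψ-amenable, then the projective tensor product A⊗̂B is Δ-weak (φ⊗ψ)-amenable. -/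
open Filter Topology

/-- `C`, together with the bilinear map `tmul` (elementary tensors) and the pairing
`tdual` (with `tdual f g` playing the role of `f ⊗ g ∈ C*`), is (a realization of) the
projective tensor product `A ⊗̂ B` of the Banach algebras `A` and `B`. -/
structure IsProjTensor
    (A : Type*) [NonUnitalNormedRing A] [NormedSpace ℂ A]
    [IsScalarTower ℂ A A] [SMulCommClass ℂ A A]
    (B : Type*) [NonUnitalNormedRing B] [NormedSpace ℂ B]
    [IsScalarTower ℂ B B] [SMulCommClass ℂ B B]
    (C : Type*) [NonUnitalNormedRing C] [NormedSpace ℂ C]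
    [IsScalarTower ℂ C C] [SMulCommClass ℂ C C]
    (tmul : A → B → C)
    (tdual : (A →L[ℂ] ℂ) → (B →L[ℂ] ℂ) → (C →L[ℂ] ℂ)) : Prop where
  add_left : ∀ (a a' : A) (b : B), tmul (a + a') b = tmul a b + tmul a' b
  add_right : ∀ (a : A) (b b' : B), tmul a (b + b') = tmul a b + tmul a b'
  smul_left : ∀ (c : ℂ) (a : A) (b : B), tmul (c • a) b = c • tmul a b
  smul_right : ∀ (c : ℂ) (a : A) (b : B), tmul a (c • b) = c • tmul a b
  norm_tmul_le : ∀ (a : A) (b : B), ‖tmul a b‖ ≤ ‖a‖ * ‖b‖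
  mul_tmul : ∀ (a a' : A) (b b' : B),
    tmul a b * tmul a' b' = tmul (a * a') (b * b')
  /-- every element of `A ⊗̂ B` is an absolutely convergent sum of elementary tensors -/
  rep : ∀ G : C, ∃ (c : ℕ → A) (d : ℕ → B),
    Summable (fun i => ‖c i‖ * ‖d i‖) ∧ HasSum (fun i => tmul (c i) (d i)) G
  tdual_tmul : ∀ (f : A →L[ℂ] ℂ) (g : B →L[ℂ] ℂ) (a : A) (b : B),
    tdual f g (tmul a b) = f a * g b
  /-- `Δ(A ⊗̂ B) = {φ ⊗ ψ : φ ∈ Δ(A), ψ ∈ Δ(B)}` -/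
  char_iff : ∀ χ : C →L[ℂ] ℂ, IsChar C χ ↔
    ∃ (φ : A →L[ℂ] ℂ) (ψ : B →L[ℂ] ℂ), IsChar A φ ∧ IsChar B ψ ∧ χ = tdual φ ψ

/- ----------------------------------------------------------------- -/
/- Auxiliary material                                                 -/
/- ----------------------------------------------------------------- -/

set_option maxHeartbeats 1000000
set_option synthInstance.maxHeartbeats 400000

section DwaAux

open ContinuousLinearMap

lemma dwa_core {E F : Type*} [NormedAddCommGroup E] [NormedSpace ℂ E]
    [NormedAddCommGroup F] [NormedSpace ℂ F]
    (p : ℕ → (E →L[ℂ] ℂ)) (q : ℕ → (F →L[ℂ] ℂ))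
    (hpq : Summable fun i => ‖p i‖ * ‖q i‖)
    (T : E →L[ℂ] F →L[ℂ] ℂ)
    (hT : ∀ a b, HasSum (fun i => p i a * q i b) (T a b))
    (m' : (E →L[ℂ] ℂ) →L[ℂ] ℂ) (n' : (F →L[ℂ] ℂ) →L[ℂ] ℂ)
    (W : E →L[ℂ] ℂ) (hW : ∀ a, W a = n' (T a)) :
    HasSum (fun i => m' (p i) * n' (q i)) (m' W) := by
  have step1 : ∀ a : E, HasSum (fun i => p i a * n' (q i)) (n' (T a)) := by
    intro a
    have hsg : Summable (fun i => (p i a) • q i) := by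
      apply Summable.of_norm
      apply Summable.of_nonneg_of_le (fun i => norm_nonneg _)
        (fun i => ?_) (hpq.mul_right ‖a‖)
      calc ‖(p i a) • q i‖ ≤ ‖p i a‖ * ‖q i‖ := ContinuousLinearMap.opNorm_smul_le _ _
        _ ≤ (‖p i‖ * ‖a‖) * ‖q i‖ := by
            gcongr; exact (p i).le_opNorm a
        _ = ‖p i‖ * ‖q i‖ * ‖a‖ := by ring
    obtain ⟨S, hS⟩ := hsg
    have hSa : S = T a := by
      ext b
      have h1 : HasSum (fun i => ((p i a) • q i) b) (S b) :=
        hS.mapL (ContinuousLinearMap.apply ℂ ℂ b)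
      simp only [ContinuousLinearMap.smul_apply, smul_eq_mul] at h1
      exact h1.unique (hT a b)
    have := hS.mapL n'
    rw [hSa] at this
    simpa only [map_smul, smul_eq_mul] using this
  have hsf : Summable (fun i => (n' (q i)) • p i) := by
    apply Summable.of_norm
    apply Summable.of_nonneg_of_le (fun i => norm_nonneg _)
      (fun i => ?_) (hpq.mul_left ‖n'‖)
    calc ‖(n' (q i)) • p i‖ ≤ ‖n' (q i)‖ * ‖p i‖ := ContinuousLinearMap.opNorm_smul_le _ _
      _ ≤ (‖n'‖ * ‖q i‖) * ‖p i‖ := by gcongr; exact n'.le_opNorm _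
      _ = ‖n'‖ * (‖p i‖ * ‖q i‖) := by ring
  obtain ⟨S', hS'⟩ := hsf
  have hS'W : S' = W := by
    ext a
    have h1 : HasSum (fun i => ((n' (q i)) • p i) a) (S' a) :=
      hS'.mapL (ContinuousLinearMap.apply ℂ ℂ a)
    simp only [ContinuousLinearMap.smul_apply, smul_eq_mul] at h1
    rw [hW a]
    refine HasSum.unique ?_ (step1 a)
    simpa only [mul_comm] using h1
  have := hS'.mapL m'
  rw [hS'W] at this
  simp only [map_smul, smul_eq_mul] at this
  simpa only [mul_comm] using this

variable {A B C : Type*}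
  [NonUnitalNormedRing A] [NormedSpace ℂ A] [IsScalarTower ℂ A A] [SMulCommClass ℂ A A]
  [NonUnitalNormedRing B] [NormedSpace ℂ B] [IsScalarTower ℂ B B] [SMulCommClass ℂ B B]
  [NonUnitalNormedRing C] [NormedSpace ℂ C] [IsScalarTower ℂ C C] [SMulCommClass ℂ C C]
  {tmul : A → B → C} {tdual : (A →L[ℂ] ℂ) → (B →L[ℂ] ℂ) → (C →L[ℂ] ℂ)}

@[simp] lemma dwa_dualAct_apply (f : A →L[ℂ] ℂ) (a x : A) :
    dualAct A f a x = f (a * x) := rfl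

lemma dwa_dualAct_norm_le (f : A →L[ℂ] ℂ) (a : A) :
    ‖dualAct A f a‖ ≤ ‖f‖ * ‖a‖ := by
  refine (ContinuousLinearMap.opNorm_comp_le _ _).trans ?_
  gcongr
  exact ContinuousLinearMap.opNorm_mul_apply_le _ _ _

lemma dwa_dualAct_char {χ : A →L[ℂ] ℂ} (hχ : ∀ a b : A, χ (a * b) = χ a * χ b) (x : A) :
    dualAct A χ x = χ x • χ := by
  ext a; simp [hχ]

lemma dwa_dualAct_smul (f : A →L[ℂ] ℂ) (c : ℂ) (x : A) :
    dualAct A (c • f) x = c • dualAct A f x := by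
  ext a; simp

/-- the elementary tensor map as a continuous bilinear map -/
noncomputable def dwaTL (hpt : IsProjTensor A B C tmul tdual) : A →L[ℂ] B →L[ℂ] C :=
  LinearMap.mkContinuous₂
    (LinearMap.mk₂ ℂ tmul hpt.add_left hpt.smul_left hpt.add_right hpt.smul_right)
    1 (fun a b => by simpa using hpt.norm_tmul_le a b)

@[simp] lemma dwaTL_apply (hpt : IsProjTensor A B C tmul tdual) (a : A) (b : B) :
    dwaTL hpt a b = tmul a b := rfl

/-- `F ↦ (a ↦ (b ↦ F (a ⊗ b)))` -/
noncomputable def dwaSF (hpt : IsProjTensor A B C tmul tdual) :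
    (C →L[ℂ] ℂ) →L[ℂ] A →L[ℂ] B →L[ℂ] ℂ :=
  ((ContinuousLinearMap.compL ℂ A (B →L[ℂ] C) (B →L[ℂ] ℂ)).flip (dwaTL hpt)).comp
    (ContinuousLinearMap.compL ℂ B C ℂ)

@[simp] lemma dwaSF_apply (hpt : IsProjTensor A B C tmul tdual) (F : C →L[ℂ] ℂ)
    (a : A) (b : B) : dwaSF hpt F a b = F (tmul a b) := rfl

/-- `F ↦ (b ↦ (a ↦ F (a ⊗ b)))` -/
noncomputable def dwaSF' (hpt : IsProjTensor A B C tmul tdual) :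
    (C →L[ℂ] ℂ) →L[ℂ] B →L[ℂ] A →L[ℂ] ℂ :=
  ((ContinuousLinearMap.compL ℂ B (A →L[ℂ] C) (A →L[ℂ] ℂ)).flip (dwaTL hpt).flip).comp
    (ContinuousLinearMap.compL ℂ A C ℂ)

@[simp] lemma dwaSF'_apply (hpt : IsProjTensor A B C tmul tdual) (F : C →L[ℂ] ℂ)
    (b : B) (a : A) : dwaSF' hpt F b a = F (tmul a b) := rfl

/-- precomposition with left multiplication, `g ↦ (x ↦ g (a₀ * x))`, as a CLM -/
noncomputable def dwaD (a₀ : A) : (A →L[ℂ] ℂ) →L[ℂ] (A →L[ℂ] ℂ) :=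
  (ContinuousLinearMap.compL ℂ A A ℂ).flip (ContinuousLinearMap.mul ℂ A a₀)

@[simp] lemma dwaD_apply (a₀ : A) (g : A →L[ℂ] ℂ) (x : A) :
    dwaD a₀ g x = g (a₀ * x) := rfl

lemma dwaD_eq_dualAct (a₀ : A) (g : A →L[ℂ] ℂ) : dwaD a₀ g = dualAct A g a₀ := rfl

/-- the functional `F ↦ m (a ↦ n (b ↦ F (a⊗b)))` -/
noncomputable def dwaP (hpt : IsProjTensor A B C tmul tdual)
    (m : (A →L[ℂ] ℂ) →L[ℂ] ℂ) (n : (B →L[ℂ] ℂ) →L[ℂ] ℂ) : (C →L[ℂ] ℂ) →L[ℂ] ℂ :=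
  m.comp ((ContinuousLinearMap.compL ℂ A (B →L[ℂ] ℂ) ℂ n).comp (dwaSF hpt))

noncomputable def dwaQX (hpt : IsProjTensor A B C tmul tdual)
    (m : (A →L[ℂ] ℂ) →L[ℂ] ℂ) (a₀ : A) : (C →L[ℂ] ℂ) →L[ℂ] (B →L[ℂ] ℂ) :=
  (ContinuousLinearMap.compL ℂ B (A →L[ℂ] ℂ) ℂ (m.comp (dwaD a₀))).comp (dwaSF' hpt)

@[simp] lemma dwaQX_apply (hpt : IsProjTensor A B C tmul tdual)
    (m : (A →L[ℂ] ℂ) →L[ℂ] ℂ) (a₀ : A) (F : C →L[ℂ] ℂ) (b : B) :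
    dwaQX hpt m a₀ F b = m (dwaD a₀ (dwaSF' hpt F b)) := rfl

noncomputable def dwaRY (hpt : IsProjTensor A B C tmul tdual)
    (n : (B →L[ℂ] ℂ) →L[ℂ] ℂ) (b₀ : B) : (C →L[ℂ] ℂ) →L[ℂ] (A →L[ℂ] ℂ) :=
  (ContinuousLinearMap.compL ℂ A (B →L[ℂ] ℂ) ℂ (n.comp (dwaD b₀))).comp (dwaSF hpt)

@[simp] lemma dwaRY_apply (hpt : IsProjTensor A B C tmul tdual)
    (n : (B →L[ℂ] ℂ) →L[ℂ] ℂ) (b₀ : B) (F : C →L[ℂ] ℂ) (a : A) :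
    dwaRY hpt n b₀ F a = n (dwaD b₀ (dwaSF hpt F a)) := rfl

/-- the candidate functional `M` -/
noncomputable def dwaM (hpt : IsProjTensor A B C tmul tdual)
    (m : (A →L[ℂ] ℂ) →L[ℂ] ℂ) (n : (B →L[ℂ] ℂ) →L[ℂ] ℂ) (a₀ : A) (b₀ : B) :
    (C →L[ℂ] ℂ) →L[ℂ] ℂ :=
  dwaP hpt m n
    + n.comp ((dwaSF hpt).flip a₀ - dwaQX hpt m a₀)
    + m.comp ((dwaSF' hpt).flip b₀ - dwaRY hpt n b₀)

lemma dwaM_apply (hpt : IsProjTensor A B C tmul tdual)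
    (m : (A →L[ℂ] ℂ) →L[ℂ] ℂ) (n : (B →L[ℂ] ℂ) →L[ℂ] ℂ) (a₀ : A) (b₀ : B)
    (F : C →L[ℂ] ℂ) :
    dwaM hpt m n a₀ b₀ F
      = m ((ContinuousLinearMap.compL ℂ A (B →L[ℂ] ℂ) ℂ n) (dwaSF hpt F))
        + (n (dwaSF hpt F a₀) - n (dwaQX hpt m a₀ F))
        + (m (dwaSF' hpt F b₀) - m (dwaRY hpt n b₀ F)) := by
  simp [dwaM, dwaP, map_sub]

end DwaAux

/-- if `A` is Δ-weak `φ`-amenable and `B` is Δ-weak `ψ`-amenable, then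
`A ⊗̂ B` is Δ-weak `(φ ⊗ ψ)`-amenable. -/
theorem projTensor_deltaWeakAmenable
    (A : Type*) [NonUnitalNormedRing A] [NormedSpace ℂ A]
    [IsScalarTower ℂ A A] [SMulCommClass ℂ A A] [CompleteSpace A]
    (B : Type*) [NonUnitalNormedRing B] [NormedSpace ℂ B]
    [IsScalarTower ℂ B B] [SMulCommClass ℂ B B] [CompleteSpace B]
    (C : Type*) [NonUnitalNormedRing C] [NormedSpace ℂ C]
    [IsScalarTower ℂ C C] [SMulCommClass ℂ C C] [CompleteSpace C]
    (tmul : A → B → C)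
    (tdual : (A →L[ℂ] ℂ) → (B →L[ℂ] ℂ) → (C →L[ℂ] ℂ))
    (hpt : IsProjTensor A B C tmul tdual)
    (φ : A →L[ℂ] ℂ) (ψ : B →L[ℂ] ℂ)
    (hφ : IsChar A φ ∨ φ = 0) (hψ : IsChar B ψ ∨ ψ = 0)
    (hA : DeltaWeakAmenable A φ) (hB : DeltaWeakAmenable B ψ) :
    DeltaWeakAmenable C (tdual φ ψ) := by
  obtain ⟨m, hm0, hm⟩ := hA
  obtain ⟨n, hn0, hn⟩ := hB
  -- choose a₀ with φ a₀ = 1 (if φ ≠ 0) and a₀ = 0 otherwise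
  obtain ⟨a₀, ha₀⟩ : ∃ a₀ : A, (φ = 0 ∧ a₀ = 0) ∨ φ a₀ = 1 := by
    by_cases h : φ = 0
    · exact ⟨0, Or.inl ⟨h, rfl⟩⟩
    · obtain ⟨a, ha⟩ : ∃ a, φ a ≠ 0 := by
        by_contra hc
        push_neg at hc
        exact h (by ext a; simpa using hc a)
      exact ⟨(φ a)⁻¹ • a, Or.inr (by simp [inv_mul_cancel₀ ha])⟩
  obtain ⟨b₀, hb₀⟩ : ∃ b₀ : B, (ψ = 0 ∧ b₀ = 0) ∨ ψ b₀ = 1 := by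
    by_cases h : ψ = 0
    · exact ⟨0, Or.inl ⟨h, rfl⟩⟩
    · obtain ⟨b, hb⟩ : ∃ b, ψ b ≠ 0 := by
        by_contra hc
        push_neg at hc
        exact h (by ext b; simpa using hc b)
      exact ⟨(ψ b)⁻¹ • b, Or.inr (by simp [inv_mul_cancel₀ hb])⟩
  -- m kills all functionals of the form `dualAct A φ x`
  have hmφ : ∀ x : A, m (dualAct A φ x) = 0 := by
    intro x
    rcases hφ with hc | h0
    · rw [dwa_dualAct_char hc.2, map_smul, smul_eq_mul, hm0, mul_zero]
    · subst h0
      have : dualAct A (0 : A →L[ℂ] ℂ) x = 0 := by ext a; simp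
      rw [this, map_zero]
  have hnψ : ∀ y : B, n (dualAct B ψ y) = 0 := by
    intro y
    rcases hψ with hc | h0
    · rw [dwa_dualAct_char hc.2, map_smul, smul_eq_mul, hn0, mul_zero]
    · subst h0
      have : dualAct B (0 : B →L[ℂ] ℂ) y = 0 := by ext b; simp
      rw [this, map_zero]
  refine ⟨dwaM hpt m n a₀ b₀, ?_, ?_⟩
  · -- M (φ ⊗ ψ) = 0
    have l1 : ∀ a : A, dwaSF hpt (tdual φ ψ) a = φ a • ψ := by
      intro a; ext b; simp [hpt.tdual_tmul]
    have l1' : ∀ b : B, dwaSF' hpt (tdual φ ψ) b = ψ b • φ := by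
      intro b; ext a; simp [hpt.tdual_tmul, mul_comm]
    rw [dwaM_apply]
    have e1 : (ContinuousLinearMap.compL ℂ A (B →L[ℂ] ℂ) ℂ n) (dwaSF hpt (tdual φ ψ)) = 0 := by
      ext a
      simp [l1 a, hn0]
    have e2 : n (dwaSF hpt (tdual φ ψ) a₀) = 0 := by
      rw [l1 a₀, map_smul, smul_eq_mul, hn0, mul_zero]
    have e3 : dwaQX hpt m a₀ (tdual φ ψ) = 0 := by
      ext b
      have : dwaD a₀ (dwaSF' hpt (tdual φ ψ) b) = ψ b • dualAct A φ a₀ := by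
        rw [l1' b, dwaD_eq_dualAct, dwa_dualAct_smul]
      simp [this, hmφ a₀]
    have e4 : m (dwaSF' hpt (tdual φ ψ) b₀) = 0 := by
      rw [l1' b₀, map_smul, smul_eq_mul, hm0, mul_zero]
    have e5 : dwaRY hpt n b₀ (tdual φ ψ) = 0 := by
      ext a
      have : dwaD b₀ (dwaSF hpt (tdual φ ψ) a) = φ a • dualAct B ψ b₀ := by
        rw [l1 a, dwaD_eq_dualAct, dwa_dualAct_smul]
      simp [this, hnψ b₀]
    rw [e1, e2, e3, e4, e5]
    simp
  · -- ∀ G χ, IsChar C χ → χ ≠ φ ⊗ ψ → M (χ · G) = χ G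
    intro G χ hχc hne
    obtain ⟨χ₁, χ₂, hχ₁, hχ₂, hχeq⟩ := (hpt.char_iff χ).1 hχc
    obtain ⟨c, d, hnorm, hrep⟩ := hpt.rep G
    set F : C →L[ℂ] ℂ := dualAct C χ G with hFdef
    -- the basic expansion
    have base : ∀ (a : A) (b : B),
        HasSum (fun i => χ₁ (c i * a) * χ₂ (d i * b)) (F (tmul a b)) := by
      intro a b
      have h := hrep.mapL (χ.comp ((ContinuousLinearMap.mul ℂ C).flip (tmul a b)))
      simp only [ContinuousLinearMap.comp_apply, ContinuousLinearMap.flip_apply,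
        ContinuousLinearMap.mul_apply'] at h
      have hfun : (fun i => χ (tmul (c i) (d i) * tmul a b))
          = fun i => χ₁ (c i * a) * χ₂ (d i * b) := by
        funext i
        rw [hpt.mul_tmul, hχeq, hpt.tdual_tmul]
      rw [hfun] at h
      have hval : F (tmul a b) = χ (G * tmul a b) := by
        simp [hFdef]
      rw [hval]
      exact h
    set Φ : ℕ → (A →L[ℂ] ℂ) := fun i => dualAct A χ₁ (c i) with hΦ
    set Ψ : ℕ → (B →L[ℂ] ℂ) := fun i => dualAct B χ₂ (d i) with hΨ
    set Φ' : ℕ → (A →L[ℂ] ℂ) := fun i => dualAct A χ₁ (c i * a₀) with hΦ'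
    set Ψ' : ℕ → (B →L[ℂ] ℂ) := fun i => dualAct B χ₂ (d i * b₀) with hΨ'
    -- summability estimates
    have hsum1 : Summable (fun i => ‖Φ i‖ * ‖Ψ i‖) := by
      apply Summable.of_nonneg_of_le (fun i => by positivity)
        (fun i => ?_) (hnorm.mul_left (‖χ₁‖ * ‖χ₂‖))
      calc ‖Φ i‖ * ‖Ψ i‖ ≤ (‖χ₁‖ * ‖c i‖) * (‖χ₂‖ * ‖d i‖) := by
            gcongr <;> [exact dwa_dualAct_norm_le _ _; exact dwa_dualAct_norm_le _ _]
        _ = ‖χ₁‖ * ‖χ₂‖ * (‖c i‖ * ‖d i‖) := by ring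
    have hsum2 : Summable (fun i => ‖Ψ i‖ * ‖Φ' i‖) := by
      apply Summable.of_nonneg_of_le (fun i => by positivity)
        (fun i => ?_) (hnorm.mul_left (‖χ₂‖ * (‖χ₁‖ * ‖a₀‖)))
      calc ‖Ψ i‖ * ‖Φ' i‖ ≤ (‖χ₂‖ * ‖d i‖) * (‖χ₁‖ * ‖c i * a₀‖) := by
            gcongr <;> [exact dwa_dualAct_norm_le _ _; exact dwa_dualAct_norm_le _ _]
        _ ≤ (‖χ₂‖ * ‖d i‖) * (‖χ₁‖ * (‖c i‖ * ‖a₀‖)) := by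
            gcongr; exact norm_mul_le _ _
        _ = ‖χ₂‖ * (‖χ₁‖ * ‖a₀‖) * (‖c i‖ * ‖d i‖) := by ring
    have hsum3 : Summable (fun i => ‖Φ i‖ * ‖Ψ' i‖) := by
      apply Summable.of_nonneg_of_le (fun i => by positivity)
        (fun i => ?_) (hnorm.mul_left (‖χ₁‖ * (‖χ₂‖ * ‖b₀‖)))
      calc ‖Φ i‖ * ‖Ψ' i‖ ≤ (‖χ₁‖ * ‖c i‖) * (‖χ₂‖ * ‖d i * b₀‖) := by
            gcongr <;> [exact dwa_dualAct_norm_le _ _; exact dwa_dualAct_norm_le _ _]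
        _ ≤ (‖χ₁‖ * ‖c i‖) * (‖χ₂‖ * (‖d i‖ * ‖b₀‖)) := by
            gcongr; exact norm_mul_le _ _
        _ = ‖χ₁‖ * (‖χ₂‖ * ‖b₀‖) * (‖c i‖ * ‖d i‖) := by ring
    -- the five HasSum facts
    have hT1 : ∀ (a : A) (b : B), HasSum (fun i => Φ i a * Ψ i b) (dwaSF hpt F a b) := by
      intro a b
      simpa [hΦ, hΨ] using base a b
    have r1 : HasSum (fun i => m (Φ i) * n (Ψ i))
        (m ((ContinuousLinearMap.compL ℂ A (B →L[ℂ] ℂ) ℂ n) (dwaSF hpt F))) :=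
      dwa_core Φ Ψ hsum1 (dwaSF hpt F) hT1 m n _ (fun a => rfl)
    have r2 : HasSum (fun i => Φ i a₀ * n (Ψ i)) (n (dwaSF hpt F a₀)) := by
      have := dwa_core Φ Ψ hsum1 (dwaSF hpt F) hT1
        (ContinuousLinearMap.apply ℂ ℂ a₀) n
        ((ContinuousLinearMap.compL ℂ A (B →L[ℂ] ℂ) ℂ n) (dwaSF hpt F)) (fun a => rfl)
      simpa using this
    have r3 : HasSum (fun i => n (Ψ i) * m (Φ' i)) (n (dwaQX hpt m a₀ F)) := by
      refine dwa_core Ψ Φ' hsum2 ((dwaD a₀).comp (dwaSF' hpt F)) ?_ n m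
        (dwaQX hpt m a₀ F) (fun b => rfl)
      intro b a
      have h := base (a₀ * a) b
      have hfun : (fun i => Ψ i b * Φ' i a)
          = fun i => χ₁ (c i * (a₀ * a)) * χ₂ (d i * b) := by
        funext i
        simp only [hΨ, hΦ', dwa_dualAct_apply, mul_assoc]
        ring
      rw [hfun]
      simpa using h
    have r4 : HasSum (fun i => m (Φ i) * Ψ i b₀) (m (dwaSF' hpt F b₀)) := by
      have := dwa_core Φ Ψ hsum1 (dwaSF hpt F) hT1 m
        (ContinuousLinearMap.apply ℂ ℂ b₀) (dwaSF' hpt F b₀) (fun a => rfl)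
      simpa using this
    have r5 : HasSum (fun i => m (Φ i) * n (Ψ' i)) (m (dwaRY hpt n b₀ F)) := by
      refine dwa_core Φ Ψ' hsum3 ((dwaD b₀).comp (dwaSF hpt F)) ?_ m n
        (dwaRY hpt n b₀ F) (fun a => rfl)
      intro a b
      have h := base a (b₀ * b)
      have hfun : (fun i => Φ i a * Ψ' i b)
          = fun i => χ₁ (c i * a) * χ₂ (d i * (b₀ * b)) := by
        funext i
        simp only [hΦ, hΨ', dwa_dualAct_apply, mul_assoc]
      rw [hfun]
      simpa using h
    -- target
    have htarget : HasSum (fun i => χ₁ (c i) * χ₂ (d i)) (χ G) := by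
      have h := hrep.mapL χ
      have hfun : (fun i => χ (tmul (c i) (d i))) = fun i => χ₁ (c i) * χ₂ (d i) := by
        funext i
        rw [hχeq, hpt.tdual_tmul]
      rwa [hfun] at h
    -- combine
    have combo : HasSum (fun i =>
        m (Φ i) * n (Ψ i) + (Φ i a₀ * n (Ψ i) - n (Ψ i) * m (Φ' i))
          + (m (Φ i) * Ψ i b₀ - m (Φ i) * n (Ψ' i)))
        (dwaM hpt m n a₀ b₀ F) := by
      rw [dwaM_apply]
      exact (r1.add (r2.sub r3)).add (r4.sub r5)
    -- termwise identification
    have hterm : (fun i =>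
        m (Φ i) * n (Ψ i) + (Φ i a₀ * n (Ψ i) - n (Ψ i) * m (Φ' i))
          + (m (Φ i) * Ψ i b₀ - m (Φ i) * n (Ψ' i)))
        = fun i => χ₁ (c i) * χ₂ (d i) := by
      funext i
      by_cases h1 : χ₁ = φ <;> by_cases h2 : χ₂ = ψ
      · exact absurd (by rw [hχeq, h1, h2]) hne
      · -- χ₁ = φ, χ₂ ≠ ψ
        have hφa₀ : φ a₀ = 1 := by
          rcases ha₀ with ⟨h0, _⟩ | h
          · exact absurd (h1.trans h0) hχ₁.1
          · exact h
        have hmΦ : m (Φ i) = 0 := by rw [hΦ, h1]; exact hmφ _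
        have hmΦ' : m (Φ' i) = 0 := by rw [hΦ', h1]; exact hmφ _
        have hnΨ : n (Ψ i) = χ₂ (d i) := hn (d i) χ₂ hχ₂ h2
        have hΦa₀ : Φ i a₀ = χ₁ (c i) := by
          show χ₁ (c i * a₀) = χ₁ (c i)
          rw [hχ₁.2, h1, hφa₀, mul_one]
        rw [hmΦ, hmΦ', hnΨ, hΦa₀]
        ring
      · -- χ₁ ≠ φ, χ₂ = ψ
        have hψb₀ : ψ b₀ = 1 := by
          rcases hb₀ with ⟨h0, _⟩ | h
          · exact absurd (h2.trans h0) hχ₂.1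
          · exact h
        have hnΨ : n (Ψ i) = 0 := by rw [hΨ, h2]; exact hnψ _
        have hnΨ' : n (Ψ' i) = 0 := by rw [hΨ', h2]; exact hnψ _
        have hmΦ : m (Φ i) = χ₁ (c i) := hm (c i) χ₁ hχ₁ h1
        have hΨb₀ : Ψ i b₀ = χ₂ (d i) := by
          show χ₂ (d i * b₀) = χ₂ (d i)
          rw [hχ₂.2, h2, hψb₀, mul_one]
        rw [hnΨ, hnΨ', hmΦ, hΨb₀]
        ring
      · -- χ₁ ≠ φ, χ₂ ≠ ψ
        have hmΦ : m (Φ i) = χ₁ (c i) := hm (c i) χ₁ hχ₁ h1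
        have hmΦ' : m (Φ' i) = χ₁ (c i * a₀) := hm (c i * a₀) χ₁ hχ₁ h1
        have hnΨ : n (Ψ i) = χ₂ (d i) := hn (d i) χ₂ hχ₂ h2
        have hnΨ' : n (Ψ' i) = χ₂ (d i * b₀) := hn (d i * b₀) χ₂ hχ₂ h2
        have hΦa₀ : Φ i a₀ = χ₁ (c i * a₀) := rfl
        have hΨb₀ : Ψ i b₀ = χ₂ (d i * b₀) := rfl
        rw [hmΦ, hmΦ', hnΨ, hnΨ', hΦa₀, hΨb₀]
        ring
    rw [hterm] at combo
    exact combo.unique htarget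
end

section
/- Let A and B be Banach algebras and T : B → A a continuous algebra homomorphism with ‖T‖ ≤ 1. If the Lau product A ×_T B has a Δ-weak approximate identity ((a_α, b_α)), then B has a Δ-weak approximate identity (namely (b_α)) and A has a Δ-weak approximate identity (namely (a_α + T(b_α))). -/
open Filter Topology

/-- `L`, together with the linear identification `e : L ≃ A × B`, is (a realization of)
the Lau product `A ×_T B`: the norm is `‖(a,b)‖ = ‖a‖ + ‖b‖` and the multiplication is
`(a₁,b₁)(a₂,b₂) = (a₁a₂ + a₁ T(b₂) + T(b₁) a₂, b₁ b₂)`. -/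
structure IsLauProduct
    (A : Type*) [NonUnitalNormedRing A] [NormedSpace ℂ A]
    [IsScalarTower ℂ A A] [SMulCommClass ℂ A A]
    (B : Type*) [NonUnitalNormedRing B] [NormedSpace ℂ B]
    [IsScalarTower ℂ B B] [SMulCommClass ℂ B B]
    (L : Type*) [NonUnitalNormedRing L] [NormedSpace ℂ L]
    [IsScalarTower ℂ L L] [SMulCommClass ℂ L L]
    (T : B →L[ℂ] A) (e : L ≃ₗ[ℂ] A × B) : Prop where
  norm_eq : ∀ x : L, ‖x‖ = ‖(e x).1‖ + ‖(e x).2‖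
  mul_eq : ∀ x y : L,
    e (x * y) = ((e x).1 * (e y).1 + (e x).1 * T ((e y).2) + T ((e x).2) * (e y).1,
      (e x).2 * (e y).2)

/-- if the Lau product `A ×_T B` has a Δ-weak approximate identity
`((a_α, b_α))`, then `(b_α)` is a Δ-weak approximate identity for `B` and
`(a_α + T b_α)` is a Δ-weak approximate identity for `A`. -/
theorem lauProduct_deltaWeakApproxIdentity_factors
    (A : Type*) [NonUnitalNormedRing A] [NormedSpace ℂ A]
    [IsScalarTower ℂ A A] [SMulCommClass ℂ A A] [CompleteSpace A]
    (B : Type*) [NonUnitalNormedRing B] [NormedSpace ℂ B]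
    [IsScalarTower ℂ B B] [SMulCommClass ℂ B B] [CompleteSpace B]
    (L : Type*) [NonUnitalNormedRing L] [NormedSpace ℂ L]
    [IsScalarTower ℂ L L] [SMulCommClass ℂ L L] [CompleteSpace L]
    (T : B →L[ℂ] A) (hT_mul : ∀ b b' : B, T (b * b') = T b * T b') (hT_norm : ‖T‖ ≤ 1)
    (e : L ≃ₗ[ℂ] A × B) (hL : IsLauProduct A B L T e)
    {ι : Type*} (l : Filter ι) (hl : l.NeBot) (u : ι → L)
    (hu : DeltaWeakApproxIdentity L l u) :
    DeltaWeakApproxIdentity B l (fun i => (e (u i)).2) ∧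
      DeltaWeakApproxIdentity A l (fun i => (e (u i)).1 + T ((e (u i)).2)) := by
  -- the continuous linear projections L → B and L → A (the latter being a + T b)
  set pB : L →L[ℂ] B :=
    LinearMap.mkContinuous ((LinearMap.snd ℂ A B) ∘ₗ e.toLinearMap) 1
      (fun x => by
        simp only [LinearMap.coe_comp, Function.comp_apply, LinearEquiv.coe_coe,
          LinearMap.snd_apply, one_mul, hL.norm_eq x]
        exact le_add_of_nonneg_left (norm_nonneg _)) with hpB
  set pA : L →L[ℂ] A :=
    LinearMap.mkContinuous
      (((LinearMap.fst ℂ A B) + T.toLinearMap ∘ₗ (LinearMap.snd ℂ A B)) ∘ₗ e.toLinearMap) 1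
      (fun x => by
        simp only [LinearMap.coe_comp, Function.comp_apply, LinearEquiv.coe_coe,
          LinearMap.add_apply, LinearMap.fst_apply, LinearMap.snd_apply,
          ContinuousLinearMap.coe_coe, one_mul, hL.norm_eq x]
        calc ‖(e x).1 + T ((e x).2)‖ ≤ ‖(e x).1‖ + ‖T ((e x).2)‖ := norm_add_le _ _
          _ ≤ ‖(e x).1‖ + ‖(e x).2‖ := by
              gcongr
              calc ‖T ((e x).2)‖ ≤ ‖T‖ * ‖(e x).2‖ := T.le_opNorm _
                _ ≤ 1 * ‖(e x).2‖ := by gcongr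
                _ = ‖(e x).2‖ := one_mul _) with hpA
  have hpB_apply : ∀ x : L, pB x = (e x).2 := fun x => rfl
  have hpA_apply : ∀ x : L, pA x = (e x).1 + T ((e x).2) := fun x => rfl
  constructor
  · -- B part
    intro b ψ hψ
    set Ψ : L →L[ℂ] ℂ := ψ.comp pB with hΨ
    have hΨ_apply : ∀ x : L, Ψ x = ψ ((e x).2) := fun x => rfl
    have hΨchar : IsChar L Ψ := by
      constructor
      · obtain ⟨b₀, hb₀⟩ := DFunLike.ne_iff.mp hψ.1
        intro h
        apply hb₀
        have := congrArg (fun f : L →L[ℂ] ℂ => f (e.symm (0, b₀))) h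
        simpa [hΨ_apply, e.apply_symm_apply] using this
      · intro x y
        simp only [hΨ_apply, hL.mul_eq x y]
        exact hψ.2 _ _
    have h := hu (e.symm (0, b)) Ψ hΨchar
    have key : ∀ i, Ψ (e.symm (0, b) * u i) = ψ (b * (e (u i)).2) := by
      intro i
      simp [hΨ_apply, hL.mul_eq, e.apply_symm_apply]
    have key2 : Ψ (e.symm (0, b)) = ψ b := by
      simp [hΨ_apply, e.apply_symm_apply]
    rw [← key2]
    exact h.congr key
  · -- A part
    intro a φ hφ
    set Φ : L →L[ℂ] ℂ := φ.comp pA with hΦ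
    have hΦ_apply : ∀ x : L, Φ x = φ ((e x).1 + T ((e x).2)) := fun x => rfl
    have hΦchar : IsChar L Φ := by
      constructor
      · obtain ⟨a₀, ha₀⟩ := DFunLike.ne_iff.mp hφ.1
        intro h
        apply ha₀
        have := congrArg (fun f : L →L[ℂ] ℂ => f (e.symm (a₀, 0))) h
        simpa [hΦ_apply, e.apply_symm_apply] using this
      · intro x y
        simp only [hΦ_apply, hL.mul_eq x y, hT_mul]
        rw [show (e x).1 * (e y).1 + (e x).1 * T ((e y).2) + T ((e x).2) * (e y).1
              + T ((e x).2) * T ((e y).2)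
            = ((e x).1 + T ((e x).2)) * ((e y).1 + T ((e y).2)) by noncomm_ring]
        exact hφ.2 _ _
    have h := hu (e.symm (a, 0)) Φ hΦchar
    have key : ∀ i, Φ (e.symm (a, 0) * u i) = φ (a * ((e (u i)).1 + T ((e (u i)).2))) := by
      intro i
      simp [hΦ_apply, hL.mul_eq, e.apply_symm_apply, mul_add]
    have key2 : Φ (e.symm (a, 0)) = φ a := by
      simp [hΦ_apply, e.apply_symm_apply]
    rw [← key2]
    exact h.congr key
end

section
/- Let A and B be Banach algebras and T : B → A a continuous algebra homomorphism with ‖T‖ ≤ 1. If A has a Δ-weak approximate identity (a_α) and B has a Δ-weak approximate identity (b_β), then the net ((a_α − T(b_β), b_β)) indexed by pairs (α, β) is a Δ-weak approximate identity for the Lau product A ×_T B. -/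
open Filter Topology

/-- if `A` has a Δ-weak approximate identity `(a_α)` and `B` has a Δ-weak
approximate identity `(b_β)`, then `((a_α - T b_β, b_β))` is a Δ-weak approximate
identity for the Lau product `A ×_T B`. -/
theorem lauProduct_deltaWeakApproxIdentity
    (A : Type*) [NonUnitalNormedRing A] [NormedSpace ℂ A]
    [IsScalarTower ℂ A A] [SMulCommClass ℂ A A] [CompleteSpace A]
    (B : Type*) [NonUnitalNormedRing B] [NormedSpace ℂ B]
    [IsScalarTower ℂ B B] [SMulCommClass ℂ B B] [CompleteSpace B]
    (L : Type*) [NonUnitalNormedRing L] [NormedSpace ℂ L]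
    [IsScalarTower ℂ L L] [SMulCommClass ℂ L L] [CompleteSpace L]
    (T : B →L[ℂ] A) (hT_mul : ∀ b b' : B, T (b * b') = T b * T b') (hT_norm : ‖T‖ ≤ 1)
    (e : L ≃ₗ[ℂ] A × B) (hL : IsLauProduct A B L T e)
    {ι κ : Type*} (l : Filter ι) (l' : Filter κ) (hl : l.NeBot) (hl' : l'.NeBot)
    (a : ι → A) (b : κ → B)
    (ha : DeltaWeakApproxIdentity A l a) (hb : DeltaWeakApproxIdentity B l' b) :
    DeltaWeakApproxIdentity L (l ×ˢ l')
      (fun p : ι × κ => e.symm (a p.1 - T (b p.2), b p.2)) := by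
  intro x φ hφ
  classical
  have hnormA : ∀ a : A, ‖(e.symm (a, 0) : L)‖ = ‖a‖ := by
    intro a; rw [hL.norm_eq, e.apply_symm_apply]; simp
  have hnormB : ∀ b : B, ‖(e.symm (0, b) : L)‖ = ‖b‖ := by
    intro b; rw [hL.norm_eq, e.apply_symm_apply]; simp
  set f : A →L[ℂ] ℂ :=
    LinearMap.mkContinuous (φ.toLinearMap ∘ₗ e.symm.toLinearMap ∘ₗ LinearMap.inl ℂ A B) ‖φ‖
      (fun a => by simpa [hnormA a] using φ.le_opNorm (e.symm (a, 0))) with hf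
  set g : B →L[ℂ] ℂ :=
    LinearMap.mkContinuous (φ.toLinearMap ∘ₗ e.symm.toLinearMap ∘ₗ LinearMap.inr ℂ A B) ‖φ‖
      (fun b => by simpa [hnormB b] using φ.le_opNorm (e.symm (0, b))) with hg
  have hf_def : ∀ a : A, f a = φ (e.symm (a, 0)) := fun a => rfl
  have hg_def : ∀ b : B, g b = φ (e.symm (0, b)) := fun b => rfl
  have hdecomp : ∀ y : L, φ y = f (e y).1 + g (e y).2 := by
    intro y
    have hy : y = e.symm ((e y).1, 0) + e.symm (0, (e y).2) := by
      rw [← map_add]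
      simp
    conv_lhs => rw [hy]
    rw [map_add, ← hf_def, ← hg_def]
  have hmul := hφ.2
  have hprod : ∀ p q : A × B, φ (e.symm p * e.symm q)
      = f (p.1 * q.1 + p.1 * T q.2 + T p.2 * q.1) + g (p.2 * q.2) := by
    intro p q
    rw [hdecomp, hL.mul_eq]
    simp [e.apply_symm_apply, hf_def, hg_def]
  have fmul : ∀ a a' : A, f (a * a') = f a * f a' := by
    intro a a'
    have h := hmul (e.symm (a, 0)) (e.symm (a', 0))
    rw [hprod] at h
    simpa [← hf_def, ← hg_def] using h
  have gmul : ∀ b b' : B, g (b * b') = g b * g b' := by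
    intro b b'
    have h := hmul (e.symm (0, b)) (e.symm (0, b'))
    rw [hprod] at h
    simpa [← hf_def, ← hg_def] using h
  have fcross : ∀ (a₀ : A) (b₀ : B), f (a₀ * T b₀) = f a₀ * g b₀ := by
    intro a₀ b₀
    have h := hmul (e.symm (a₀, 0)) (e.symm (0, b₀))
    rw [hprod] at h
    simpa [← hf_def, ← hg_def] using h
  have hxu : ∀ p : ι × κ, φ (x * e.symm (a p.1 - T (b p.2), b p.2))
      = f ((e x).1 * a p.1 + T (e x).2 * a p.1 - T ((e x).2 * b p.2))
        + g ((e x).2 * b p.2) := by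
    intro p
    have h := hprod (e x) (a p.1 - T (b p.2), b p.2)
    rw [e.symm_apply_apply] at h
    rw [h]
    congr 2
    rw [hT_mul]
    simp only [map_sub, mul_sub, sub_mul]
    abel
  show Tendsto (fun p : ι × κ => φ (x * e.symm (a p.1 - T (b p.2), b p.2)))
      (l ×ˢ l') (𝓝 (φ x))
  by_cases hf0 : f = 0
  · have hgchar : IsChar B g := by
      refine ⟨fun hg0 => hφ.1 ?_, gmul⟩
      ext y
      rw [hdecomp y, hf0, hg0]
      simp
    have hx : φ x = g (e x).2 := by rw [hdecomp x, hf0]; simp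
    rw [hx]
    have key : Tendsto (fun p : ι × κ => g ((e x).2 * b p.2)) (l ×ˢ l')
        (𝓝 (g (e x).2)) := (hb (e x).2 g hgchar).comp tendsto_snd
    refine key.congr fun p => ?_
    rw [hxu p, hf0]
    simp
  · have fchar : IsChar A f := ⟨hf0, fmul⟩
    obtain ⟨a₀, ha₀⟩ : ∃ a₀ : A, f a₀ ≠ 0 := by
      by_contra h
      push_neg at h
      exact hf0 (by ext a'; simpa using h a')
    have gTf : ∀ b₀ : B, g b₀ = f (T b₀) := by
      intro b₀
      have h1 := fcross a₀ b₀
      have h2 := fmul a₀ (T b₀)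
      exact (mul_left_cancel₀ ha₀ (h2.symm.trans h1)).symm
    have hxu2 : ∀ p : ι × κ, φ (x * e.symm (a p.1 - T (b p.2), b p.2))
        = f ((e x).1 * a p.1) + f (T (e x).2 * a p.1) := by
      intro p
      rw [hxu p, gTf, map_sub, map_add]
      ring
    have hx : φ x = f (e x).1 + f (T (e x).2) := by rw [hdecomp x, gTf]
    rw [hx]
    have k1 : Tendsto (fun p : ι × κ => f ((e x).1 * a p.1)) (l ×ˢ l')
        (𝓝 (f (e x).1)) := (ha (e x).1 f fchar).comp tendsto_fst
    have k2 : Tendsto (fun p : ι × κ => f (T (e x).2 * a p.1)) (l ×ˢ l')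
        (𝓝 (f (T (e x).2))) := (ha (T (e x).2) f fchar).comp tendsto_fst
    exact (k1.add k2).congr fun p => (hxu2 p).symm
end

section
/- Let A and B be Banach algebras and T : B → A a continuous algebra homomorphism with ‖T‖ ≤ 1. If the Lau product A ×_T B is Δ-weak character amenable, then both A and B are Δ-weak character amenable. -/
open Filter Topology

section Aux

variable {A : Type*} [NonUnitalNormedRing A] [NormedSpace ℂ A]
  [IsScalarTower ℂ A A] [SMulCommClass ℂ A A]
  {L : Type*} [NonUnitalNormedRing L] [NormedSpace ℂ L]
  [IsScalarTower ℂ L L] [SMulCommClass ℂ L L]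

/-- Precomposition with a continuous linear map, as a continuous linear map on duals. -/
noncomputable def liftπ (π : L →L[ℂ] A) : (A →L[ℂ] ℂ) →L[ℂ] (L →L[ℂ] ℂ) :=
  LinearMap.mkContinuous
    { toFun := fun f => f.comp π
      map_add' := fun f g => by ext x; simp
      map_smul' := fun c f => by ext x; simp } ‖π‖
    (fun f => by
      calc ‖f.comp π‖ ≤ ‖f‖ * ‖π‖ := f.opNorm_comp_le π
        _ = ‖π‖ * ‖f‖ := mul_comm _ _)

@[simp] theorem liftπ_apply (π : L →L[ℂ] A) (f : A →L[ℂ] ℂ) :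
    liftπ π f = f.comp π := rfl

theorem isChar_comp (π : L →L[ℂ] A) (hπ : ∀ x y : L, π (x * y) = π x * π y)
    (s : A → L) (hs : ∀ a, π (s a) = a) {ψ : A →L[ℂ] ℂ} (hψ : IsChar A ψ) :
    IsChar L (ψ.comp π) := by
  refine ⟨?_, fun x y => by simp [hπ, hψ.2]⟩
  intro h0
  apply hψ.1
  ext a
  have := congrArg (fun f : L →L[ℂ] ℂ => f (s a)) h0
  simpa [hs] using this

theorem amenable_pullback (π : L →L[ℂ] A)
    (hπ : ∀ x y : L, π (x * y) = π x * π y)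
    (s : A → L) (hs : ∀ a, π (s a) = a)
    (φ : A →L[ℂ] ℂ) (h : DeltaWeakAmenable L (φ.comp π)) :
    DeltaWeakAmenable A φ := by
  obtain ⟨m, hm0, hm⟩ := h
  refine ⟨m.comp (liftπ π), by simpa using hm0, ?_⟩
  intro a ψ hψ hne
  have hψπ : IsChar L (ψ.comp π) := isChar_comp π hπ s hs hψ
  have hneπ : ψ.comp π ≠ φ.comp π := by
    intro heq
    apply hne
    ext a
    have := congrArg (fun f : L →L[ℂ] ℂ => f (s a)) heq
    simpa [hs] using this
  have key : liftπ π (dualAct A ψ a) = dualAct L (ψ.comp π) (s a) := by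
    ext y
    simp [dualAct, hπ, hs]
  simp only [ContinuousLinearMap.comp_apply, key]
  rw [hm (s a) _ hψπ hneπ]
  simp [hs]

end Aux

/-- if the Lau product `A ×_T B` is Δ-weak character amenable, then so
are `A` and `B`. -/
theorem deltaWeakCharAmenable_of_lauProduct
    (A : Type*) [NonUnitalNormedRing A] [NormedSpace ℂ A]
    [IsScalarTower ℂ A A] [SMulCommClass ℂ A A] [CompleteSpace A]
    (B : Type*) [NonUnitalNormedRing B] [NormedSpace ℂ B]
    [IsScalarTower ℂ B B] [SMulCommClass ℂ B B] [CompleteSpace B]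
    (L : Type*) [NonUnitalNormedRing L] [NormedSpace ℂ L]
    [IsScalarTower ℂ L L] [SMulCommClass ℂ L L] [CompleteSpace L]
    (T : B →L[ℂ] A) (hT_mul : ∀ b b' : B, T (b * b') = T b * T b') (hT_norm : ‖T‖ ≤ 1)
    (e : L ≃ₗ[ℂ] A × B) (hL : IsLauProduct A B L T e)
    (h : DeltaWeakCharAmenable L) :
    DeltaWeakCharAmenable A ∧ DeltaWeakCharAmenable B := by
  -- the continuous version of `e`
  have he_bound : ∀ x : L, ‖e x‖ ≤ 1 * ‖x‖ := by
    intro x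
    rw [one_mul, hL.norm_eq x, Prod.norm_def]
    exact max_le (le_add_of_nonneg_right (norm_nonneg _))
      (le_add_of_nonneg_left (norm_nonneg _))
  set eL : L →L[ℂ] A × B := LinearMap.mkContinuous (e : L →ₗ[ℂ] A × B) 1 he_bound with heL
  have heL_apply : ∀ x : L, eL x = e x := fun x => rfl
  -- the two projections
  set πA : L →L[ℂ] A :=
    (ContinuousLinearMap.fst ℂ A B + T.comp (ContinuousLinearMap.snd ℂ A B)).comp eL with hπAdef
  set πB : L →L[ℂ] B := (ContinuousLinearMap.snd ℂ A B).comp eL with hπBdef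
  have hπA_apply : ∀ x : L, πA x = (e x).1 + T (e x).2 := fun x => rfl
  have hπB_apply : ∀ x : L, πB x = (e x).2 := fun x => rfl
  have hπA_mul : ∀ x y : L, πA (x * y) = πA x * πA y := by
    intro x y
    simp only [hπA_apply, hL.mul_eq x y, hT_mul]
    noncomm_ring
  have hπB_mul : ∀ x y : L, πB (x * y) = πB x * πB y := by
    intro x y
    simp only [hπB_apply, hL.mul_eq x y]
  have hsA : ∀ a : A, πA (e.symm (a, 0)) = a := by
    intro a
    simp [hπA_apply]
  have hsB : ∀ b : B, πB (e.symm (0, b)) = b := by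
    intro b
    simp [hπB_apply]
  constructor
  · intro φ hφ
    refine amenable_pullback πA hπA_mul (fun a => e.symm (a, 0)) hsA φ (h _ ?_)
    rcases hφ with hφ | rfl
    · exact Or.inl (isChar_comp πA hπA_mul _ hsA hφ)
    · right; ext x; simp
  · intro ψ hψ
    refine amenable_pullback πB hπB_mul (fun b => e.symm (0, b)) hsB ψ (h _ ?_)
    rcases hψ with hψ | rfl
    · exact Or.inl (isChar_comp πB hπB_mul _ hsB hψ)
    · right; ext x; simp
end

section
/- Let A and B be Banach algebras, T : B → A a continuous algebra homomorphism with ‖T‖ ≤ 1, and ψ ∈ Δ(B). If B is Δ-weak ψ-amenable and T(B) is dense in A, then the Lau product A ×_T B is Δ-weak (0,ψ)-amenable, where (0,ψ)(a,b) = ψ(b). (In particular, if (b_β) ⊆ ker ψ is a bounded net with ψ'(b b_β) → ψ'(b) for all b ∈ B and ψ' ∈ Δ(B)\{ψ}, then ((0, b_β)) is a bounded Δ-weak approximate identity for A ×_T B in ker(0,ψ).) -/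
open Filter Topology

/-- if `ψ ∈ Δ(B)`, `B` is Δ-weak `ψ`-amenable and `T(B)` is dense in `A`,
then the Lau product `A ×_T B` is Δ-weak `(0, ψ)`-amenable, where `(0,ψ)(a,b) = ψ b`. -/
theorem lauProduct_deltaWeakAmenable_zero_psi
    (A : Type*) [NonUnitalNormedRing A] [NormedSpace ℂ A]
    [IsScalarTower ℂ A A] [SMulCommClass ℂ A A] [CompleteSpace A]
    (B : Type*) [NonUnitalNormedRing B] [NormedSpace ℂ B]
    [IsScalarTower ℂ B B] [SMulCommClass ℂ B B] [CompleteSpace B]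
    (L : Type*) [NonUnitalNormedRing L] [NormedSpace ℂ L]
    [IsScalarTower ℂ L L] [SMulCommClass ℂ L L] [CompleteSpace L]
    (T : B →L[ℂ] A) (hT_mul : ∀ b b' : B, T (b * b') = T b * T b') (hT_norm : ‖T‖ ≤ 1)
    (e : L ≃ₗ[ℂ] A × B) (hL : IsLauProduct A B L T e)
    (ψ : B →L[ℂ] ℂ) (hψ : IsChar B ψ)
    (hB : DeltaWeakAmenable B ψ) (hdense : DenseRange T)
    (χ : L →L[ℂ] ℂ) (hχ : ∀ x : L, χ x = ψ ((e x).2)) :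
    DeltaWeakAmenable L χ := by
  classical
  obtain ⟨n, hn0, hn⟩ := hB
  -- `n` takes value 1 on every character different from `ψ`
  have hn1 : ∀ g : B →L[ℂ] ℂ, IsChar B g → g ≠ ψ → n g = 1 := by
    intro g hg hgψ
    obtain ⟨b, hb⟩ : ∃ b, g b ≠ 0 := by
      by_contra h
      push_neg at h
      exact hg.1 (ContinuousLinearMap.ext fun b => by simpa using h b)
    have h1 : dualAct B g b = g b • g := by
      ext b'
      simp [dualAct, hg.2 b b']
    have h2 := hn b g hg hgψ
    rw [h1, map_smul] at h2
    have h3 : g b * n g = g b * 1 := by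
      rw [mul_one]; simpa [smul_eq_mul] using h2
    exact mul_left_cancel₀ hb h3
  obtain ⟨b₁, hb₁⟩ : ∃ b, ψ b ≠ 0 := by
    by_contra h
    push_neg at h
    exact hψ.1 (ContinuousLinearMap.ext fun b => by simpa using h b)
  obtain ⟨b₀, hb₀⟩ : ∃ b, ψ b = 1 :=
    ⟨(ψ b₁)⁻¹ • b₁, by rw [map_smul, smul_eq_mul, inv_mul_cancel₀ hb₁]⟩
  -- the embeddings of B and A into L
  let ιlin : B →ₗ[ℂ] L := e.symm.toLinearMap.comp (LinearMap.inr ℂ A B)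
  have hιlin : ∀ b, e (ιlin b) = (0, b) := fun b => e.apply_symm_apply _
  let ι : B →L[ℂ] L := LinearMap.mkContinuous ιlin 1 (fun b => by
    rw [show ‖ιlin b‖ = _ from hL.norm_eq (ιlin b), hιlin]
    simp)
  have hι : ∀ b, e (ι b) = (0, b) := hιlin
  let jlin : A →ₗ[ℂ] L := e.symm.toLinearMap.comp (LinearMap.inl ℂ A B)
  have hjlin : ∀ a, e (jlin a) = (a, 0) := fun a => e.apply_symm_apply _
  let jA : A →L[ℂ] L := LinearMap.mkContinuous jlin 1 (fun a => by
    rw [show ‖jlin a‖ = _ from hL.norm_eq (jlin a), hjlin]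
    simp)
  have hjA : ∀ a, e (jA a) = (a, 0) := hjlin
  -- product relations
  have hjι : ∀ (a : A) (b : B), jA a * ι b = jA (a * T b) := by
    intro a b
    apply e.injective
    rw [hL.mul_eq]
    simp [hι, hjA]
  have hjj : ∀ a a' : A, jA a * jA a' = jA (a * a') := by
    intro a a'
    apply e.injective
    rw [hL.mul_eq]
    simp [hjA]
  have hιι : ∀ b b' : B, ι b * ι b' = ι (b * b') := by
    intro b b'
    apply e.injective
    rw [hL.mul_eq]
    simp [hι]
  set w : L := jA (T b₀) with hwdef
  -- the functional m
  let P : (L →L[ℂ] ℂ) →L[ℂ] (B →L[ℂ] ℂ) := (ContinuousLinearMap.compL ℂ B L ℂ).flip ι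
  let R : B →L[ℂ] L := (ContinuousLinearMap.mul ℂ L w).comp ι
  let Q : (L →L[ℂ] ℂ) →L[ℂ] (B →L[ℂ] ℂ) := (ContinuousLinearMap.compL ℂ B L ℂ).flip R
  set m : (L →L[ℂ] ℂ) →L[ℂ] ℂ :=
    n.comp P + ContinuousLinearMap.apply ℂ ℂ w - n.comp Q with hmdef
  have hmF : ∀ F : L →L[ℂ] ℂ, m F = n (F.comp ι) + F w - n (F.comp R) := fun F => rfl
  have hRb : ∀ (F : L →L[ℂ] ℂ) (b : B), (F.comp R) b = F (w * ι b) := fun F b => rfl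
  refine ⟨m, ?_, ?_⟩
  · -- m χ = 0
    have h1 : χ.comp ι = ψ := by
      ext b
      simp only [ContinuousLinearMap.comp_apply]
      rw [hχ, hι]
    have h2 : χ w = 0 := by
      rw [hχ w, hwdef, hjA]
      simp
    have h3 : χ.comp R = 0 := by
      ext b
      rw [hRb, hwdef, hjι, hχ, hjA]
      simp
    rw [hmF, h1, h2, h3, hn0, map_zero]
    ring
  · intro x θ hθ hθχ
    have hda : dualAct L θ x = θ x • θ := by
      ext y
      simp [dualAct, hθ.2 x y]
    rw [hda, map_smul, smul_eq_mul]
    suffices h : m θ = 1 by rw [h, mul_one]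
    set f : A →L[ℂ] ℂ := θ.comp jA with hfdef
    set g : B →L[ℂ] ℂ := θ.comp ι with hgdef
    have hfa : ∀ a, f a = θ (jA a) := fun _ => rfl
    have hga : ∀ b, g b = θ (ι b) := fun _ => rfl
    have hsplit : ∀ y : L, θ y = f (e y).1 + g (e y).2 := by
      intro y
      have hy : y = jA (e y).1 + ι (e y).2 := by
        apply e.injective
        rw [map_add, hjA, hι]
        simp
      conv_lhs => rw [hy]
      rw [map_add, hfa, hga]
    have hf_mul : ∀ a a', f (a * a') = f a * f a' := by
      intro a a'
      have h := hθ.2 (jA a) (jA a')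
      rw [hjj] at h
      exact h
    have hg_mul : ∀ b b', g (b * b') = g b * g b' := by
      intro b b'
      have h := hθ.2 (ι b) (ι b')
      rw [hιι] at h
      exact h
    have hfg : ∀ a b, f (a * T b) = f a * g b := by
      intro a b
      have h := hθ.2 (jA a) (ι b)
      rw [hjι] at h
      exact h
    by_cases hf0 : f = 0
    · -- θ comes from a character of B
      have hgchar : IsChar B g := by
        refine ⟨?_, hg_mul⟩
        intro hg0
        apply hθ.1
        ext y
        rw [hsplit y, hf0, hg0]
        simp
      have hgψ : g ≠ ψ := by
        intro hgψ
        apply hθχ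
        ext y
        rw [hsplit y, hf0, hgψ, hχ y]
        simp
      have hR0 : θ.comp R = 0 := by
        ext b
        rw [hRb, hwdef, hjι, ← hfa, hf0]
        simp
      have hwθ : θ w = 0 := by
        rw [hwdef, ← hfa, hf0]
        simp
      rw [hmF, ← hgdef, hwθ, hR0, map_zero, hn1 g hgchar hgψ]
      ring
    · -- θ comes from a character of A
      obtain ⟨a₀, ha₀⟩ : ∃ a, f a ≠ 0 := by
        by_contra h
        push_neg at h
        exact hf0 (ContinuousLinearMap.ext fun a => by simpa using h a)
      have hgT : ∀ b, g b = f (T b) := by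
        intro b
        have h1 := hfg a₀ b
        rw [hf_mul] at h1
        exact (mul_left_cancel₀ ha₀ h1).symm
      have hgne : g ≠ 0 := by
        intro hg0
        apply hf0
        have hfT : ∀ b, f (T b) = 0 := by
          intro b
          rw [← hgT b, hg0]
          simp
        have hclosed : IsClosed {a : A | f a = 0} := isClosed_eq f.continuous continuous_const
        have hsub : Set.range T ⊆ {a : A | f a = 0} := by
          rintro _ ⟨b, rfl⟩
          exact hfT b
        have huniv : (Set.univ : Set A) ⊆ {a : A | f a = 0} := by
          rw [← hdense.closure_range]
          exact hclosed.closure_subset_iff.mpr hsub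
        exact ContinuousLinearMap.ext fun a => huniv (Set.mem_univ a)
      have hgchar : IsChar B g := ⟨hgne, hg_mul⟩
      have hRval : θ.comp R = g b₀ • g := by
        ext b
        rw [hRb, hwdef, hjι, ← hfa, hf_mul, ← hgT, ← hgT]
        simp [smul_eq_mul]
      have hwθ : θ w = g b₀ := by
        rw [hwdef, ← hfa, ← hgT]
      rw [hmF, ← hgdef, hwθ, hRval, map_smul, smul_eq_mul]
      by_cases hgψ : g = ψ
      · rw [hgψ, hn0, hb₀]
        ring
      · rw [hn1 g hgchar hgψ]
        ring
end

section
/- Let A and B be Banach algebras, T : B → A a continuous algebra homomorphism with ‖T‖ ≤ 1, and φ ∈ Δ(A). If A is Δ-weak φ-amenable and B is Δ-weak (φ∘T)-amenable, then the Lau product A ×_T B is Δ-weak (φ, φ∘T)-amenable, where (φ, φ∘T)(a,b) = φ(a) + φ(T(b)). (In particular, if (a_α) ⊆ ker φ and (b_β) ⊆ ker(φ∘T) are bounded nets witnessing the respective Δ-weak amenabilities, then ((a_α − T(b_β), b_β)) is a bounded Δ-weak approximate identity for A ×_T B in ker(φ, φ∘T).) -/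
open Filter Topology

set_option maxHeartbeats 2000000 in
/-- if `φ ∈ Δ(A)`, `A` is Δ-weak `φ`-amenable and `B` is Δ-weak
`(φ ∘ T)`-amenable, then the Lau product `A ×_T B` is Δ-weak `(φ, φ∘T)`-amenable,
where `(φ, φ∘T)(a,b) = φ a + φ (T b)`. -/
theorem lauProduct_deltaWeakAmenable_phi_phiT
    (A : Type*) [NonUnitalNormedRing A] [NormedSpace ℂ A]
    [IsScalarTower ℂ A A] [SMulCommClass ℂ A A] [CompleteSpace A]
    (B : Type*) [NonUnitalNormedRing B] [NormedSpace ℂ B]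
    [IsScalarTower ℂ B B] [SMulCommClass ℂ B B] [CompleteSpace B]
    (L : Type*) [NonUnitalNormedRing L] [NormedSpace ℂ L]
    [IsScalarTower ℂ L L] [SMulCommClass ℂ L L] [CompleteSpace L]
    (T : B →L[ℂ] A) (hT_mul : ∀ b b' : B, T (b * b') = T b * T b') (hT_norm : ‖T‖ ≤ 1)
    (e : L ≃ₗ[ℂ] A × B) (hL : IsLauProduct A B L T e)
    (φ : A →L[ℂ] ℂ) (hφ : IsChar A φ)
    (hA : DeltaWeakAmenable A φ) (hB : DeltaWeakAmenable B (φ.comp T))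
    (χ : L →L[ℂ] ℂ) (hχ : ∀ x : L, χ x = φ ((e x).1) + φ (T ((e x).2))) :
    DeltaWeakAmenable L χ := by
  classical
  obtain ⟨mA, hmA0, hmA⟩ := hA
  obtain ⟨mB, hmB0, hmB⟩ := hB
  obtain ⟨b₀, hb₀⟩ : ∃ b₀ : B, (∃ b : B, φ (T b) = 1) → φ (T b₀) = 1 := by
    by_cases h : ∃ b : B, φ (T b) = 1
    · exact ⟨h.choose, fun _ => h.choose_spec⟩
    · exact ⟨0, fun hh => absurd hh h⟩
  obtain ⟨α, hαe⟩ : ∃ α : A →L[ℂ] L, ∀ a, e (α a) = (a, 0) := by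
    refine ⟨LinearMap.mkContinuous (e.symm.toLinearMap.comp (LinearMap.inl ℂ A B)) 1
      (fun a => ?_), fun a => ?_⟩
    · simp only [LinearMap.coe_comp, Function.comp_apply, LinearMap.inl_apply,
        LinearEquiv.coe_coe]
      rw [hL.norm_eq, e.apply_symm_apply]
      simp
    · simp [LinearMap.mkContinuous_apply]
  obtain ⟨β, hβe⟩ : ∃ β : B →L[ℂ] L, ∀ b, e (β b) = (-(T b), b) := by
    refine ⟨LinearMap.mkContinuous
      (e.symm.toLinearMap.comp (LinearMap.prod (-(T : B →ₗ[ℂ] A)) LinearMap.id)) (‖T‖ + 1)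
      (fun b => ?_), fun b => ?_⟩
    · simp only [LinearMap.coe_comp, Function.comp_apply, LinearMap.prod_apply,
        LinearMap.neg_apply, LinearMap.id_apply, LinearEquiv.coe_coe,
        ContinuousLinearMap.coe_coe]
      rw [hL.norm_eq, e.apply_symm_apply]
      show ‖-(T b)‖ + ‖b‖ ≤ (‖T‖ + 1) * ‖b‖
      rw [norm_neg]
      have h1 := T.le_opNorm b
      have h0 : (0:ℝ) ≤ ‖b‖ := norm_nonneg b
      nlinarith
    · simp [LinearMap.mkContinuous_apply]
  -- products
  have hmulα : ∀ (x : L) (a' : A), x * α a' = α (((e x).1 + T ((e x).2)) * a') := by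
    intro x a'
    apply e.injective
    rw [hL.mul_eq, hαe, hαe]
    simp [add_mul]
  have hmulβ : ∀ (x : L) (b' : B), x * β b' = β ((e x).2 * b') := by
    intro x b'
    apply e.injective
    rw [hL.mul_eq, hβe, hβe]
    simp only [mul_neg, hT_mul, Prod.mk.injEq]
    refine ⟨by abel, trivial⟩
  have hααmul : ∀ a a' : A, α a * α a' = α (a * a') := by
    intro a a'
    rw [hmulα, hαe]
    simp
  have hββmul : ∀ b b' : B, β b * β b' = β (b * b') := by
    intro b b'
    rw [hmulβ, hβe]
  have hαβmul : ∀ (a : A) (b : B), α a * β b = 0 := by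
    intro a b
    rw [hmulβ, hαe]
    simp
  have hdecomp : ∀ x : L, x = α ((e x).1 + T ((e x).2)) + β ((e x).2) := by
    intro x
    apply e.injective
    rw [map_add, hαe, hβe]
    ext
    · simp
    · simp
  -- the functional as a linear map
  set M : (L →L[ℂ] ℂ) →ₗ[ℂ] ℂ :=
    { toFun := fun F => mA (F.comp α) + mB (F.comp β) + F (β b₀)
        - mB ((F.comp β).comp (ContinuousLinearMap.mul ℂ B b₀)),
      map_add' := by
        intro F G
        simp only [ContinuousLinearMap.add_comp, map_add, ContinuousLinearMap.add_apply]
        ring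
      map_smul' := by
        intro c F
        simp only [ContinuousLinearMap.smul_comp, map_smul, ContinuousLinearMap.smul_apply,
          smul_eq_mul, RingHom.id_apply]
        ring } with hM
  have hMb : ∀ F : L →L[ℂ] ℂ, ‖M F‖ ≤
      (‖mA‖ * ‖α‖ + ‖mB‖ * ‖β‖ + ‖β b₀‖ + ‖mB‖ * ‖β‖ * ‖b₀‖) * ‖F‖ := by
    intro F
    have h1 : ‖mA (F.comp α)‖ ≤ ‖mA‖ * ‖α‖ * ‖F‖ :=
      calc ‖mA (F.comp α)‖ ≤ ‖mA‖ * ‖F.comp α‖ := mA.le_opNorm _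
        _ ≤ ‖mA‖ * (‖F‖ * ‖α‖) := by gcongr; exact F.opNorm_comp_le α
        _ = ‖mA‖ * ‖α‖ * ‖F‖ := by ring
    have h2 : ‖mB (F.comp β)‖ ≤ ‖mB‖ * ‖β‖ * ‖F‖ :=
      calc ‖mB (F.comp β)‖ ≤ ‖mB‖ * ‖F.comp β‖ := mB.le_opNorm _
        _ ≤ ‖mB‖ * (‖F‖ * ‖β‖) := by gcongr; exact F.opNorm_comp_le β
        _ = ‖mB‖ * ‖β‖ * ‖F‖ := by ring
    have h3 : ‖F (β b₀)‖ ≤ ‖β b₀‖ * ‖F‖ := by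
      calc ‖F (β b₀)‖ ≤ ‖F‖ * ‖β b₀‖ := F.le_opNorm _
        _ = ‖β b₀‖ * ‖F‖ := by ring
    have h4 : ‖mB ((F.comp β).comp (ContinuousLinearMap.mul ℂ B b₀))‖
        ≤ ‖mB‖ * ‖β‖ * ‖b₀‖ * ‖F‖ := by
      calc ‖mB ((F.comp β).comp (ContinuousLinearMap.mul ℂ B b₀))‖
          ≤ ‖mB‖ * ‖(F.comp β).comp (ContinuousLinearMap.mul ℂ B b₀)‖ := mB.le_opNorm _
        _ ≤ ‖mB‖ * (‖F.comp β‖ * ‖ContinuousLinearMap.mul ℂ B b₀‖) := by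
            gcongr; exact ContinuousLinearMap.opNorm_comp_le _ _
        _ ≤ ‖mB‖ * ((‖F‖ * ‖β‖) * ‖b₀‖) := by
            gcongr
            · exact F.opNorm_comp_le β
            · exact ContinuousLinearMap.opNorm_mul_apply_le ℂ B b₀
        _ = ‖mB‖ * ‖β‖ * ‖b₀‖ * ‖F‖ := by ring
    have htri : ‖M F‖ ≤ ‖mA (F.comp α)‖ + ‖mB (F.comp β)‖ + ‖F (β b₀)‖
        + ‖mB ((F.comp β).comp (ContinuousLinearMap.mul ℂ B b₀))‖ := by
      refine le_trans (norm_sub_le _ _) ?_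
      have := norm_add_le (mA (F.comp α) + mB (F.comp β)) (F (β b₀))
      have := norm_add_le (mA (F.comp α)) (mB (F.comp β))
      linarith
    calc ‖M F‖ ≤ (‖mA‖ * ‖α‖) * ‖F‖ + (‖mB‖ * ‖β‖) * ‖F‖ + ‖β b₀‖ * ‖F‖
        + (‖mB‖ * ‖β‖ * ‖b₀‖) * ‖F‖ := by linarith
      _ = (‖mA‖ * ‖α‖ + ‖mB‖ * ‖β‖ + ‖β b₀‖ + ‖mB‖ * ‖β‖ * ‖b₀‖) * ‖F‖ := by ring
  refine ⟨LinearMap.mkContinuous M _ hMb, ?_, ?_⟩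
  · -- value at χ is 0
    have hχα : χ.comp α = φ := by
      ext a
      simp [hχ, hαe]
    have hχβ : χ.comp β = 0 := by
      ext b
      simp [hχ, hβe]
    show mA (χ.comp α) + mB (χ.comp β) + χ (β b₀)
        - mB ((χ.comp β).comp (ContinuousLinearMap.mul ℂ B b₀)) = 0
    have hχb₀ : χ (β b₀) = 0 := by
      simp [hχ, hβe]
    rw [hχα, hχβ, hχb₀, hmA0]
    simp
  · intro x ψ hψ hψχ
    have hρmul : ∀ a a' : A, (ψ.comp α) (a * a') = (ψ.comp α) a * (ψ.comp α) a' := by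
      intro a a'
      have h := hψ.2 (α a) (α a')
      rw [hααmul] at h
      simpa using h
    have hσmul : ∀ b b' : B, (ψ.comp β) (b * b') = (ψ.comp β) b * (ψ.comp β) b' := by
      intro b b'
      have h := hψ.2 (β b) (β b')
      rw [hββmul] at h
      simpa using h
    have hzero : ∀ (a : A) (b : B), (ψ.comp α) a * (ψ.comp β) b = 0 := by
      intro a b
      have h := hψ.2 (α a) (β b)
      rw [hαβmul, map_zero] at h
      simpa using h.symm
    have hψval : ∀ y : L, ψ y = (ψ.comp α) ((e y).1 + T ((e y).2)) + (ψ.comp β) ((e y).2) := by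
      intro y
      conv_lhs => rw [hdecomp y]
      simp
    have hFα : (dualAct L ψ x).comp α
        = dualAct A (ψ.comp α) ((e x).1 + T ((e x).2)) := by
      ext a'
      simp only [ContinuousLinearMap.comp_apply, dualAct, ContinuousLinearMap.mul_apply']
      rw [hmulα]
    have hFβ : (dualAct L ψ x).comp β = dualAct B (ψ.comp β) ((e x).2) := by
      ext b'
      simp only [ContinuousLinearMap.comp_apply, dualAct, ContinuousLinearMap.mul_apply']
      rw [hmulβ]
    have hRb : ∀ (σ : B →L[ℂ] ℂ) (b : B),
        (dualAct B σ b).comp (ContinuousLinearMap.mul ℂ B b₀) = dualAct B σ (b * b₀) := by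
      intro σ b
      ext b'
      simp [dualAct, mul_assoc]
    have hFb₀ : (dualAct L ψ x) (β b₀) = (ψ.comp β) ((e x).2 * b₀) := by
      simp only [dualAct, ContinuousLinearMap.comp_apply, ContinuousLinearMap.mul_apply']
      rw [hmulβ]
    have hdB : ∀ (σ : B →L[ℂ] ℂ) (b b' : B), (dualAct B σ b) b' = σ (b * b') := by
      intro σ b b'
      simp [dualAct]
    show mA ((dualAct L ψ x).comp α) + mB ((dualAct L ψ x).comp β) + (dualAct L ψ x) (β b₀)
        - mB (((dualAct L ψ x).comp β).comp (ContinuousLinearMap.mul ℂ B b₀)) = ψ x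
    rw [hFα, hFβ, hRb, hFb₀, hψval x]
    by_cases hρ0 : ψ.comp α = 0
    · -- A-part dies, B-part is a character σ
      have hσ0 : ψ.comp β ≠ 0 := by
        intro h0
        apply hψ.1
        ext y
        rw [hψval y, hρ0, h0]
        simp
      have hdA0 : dualAct A (0 : A →L[ℂ] ℂ) ((e x).1 + T ((e x).2)) = 0 := by
        ext a'; simp [dualAct]
      rw [hρ0, hdA0, map_zero]
      simp only [ContinuousLinearMap.zero_apply, zero_add]
      by_cases hσT : ψ.comp β = φ.comp T
      · -- special case σ = φ∘T : use b₀
        have hex : ∃ b : B, φ (T b) = 1 := by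
          obtain ⟨b₁, hb₁⟩ : ∃ b₁ : B, (ψ.comp β) b₁ ≠ 0 := by
            by_contra h
            push_neg at h
            exact hσ0 (by ext b; simpa using h b)
          rw [hσT] at hb₁
          simp only [ContinuousLinearMap.comp_apply] at hb₁
          refine ⟨(φ (T b₁))⁻¹ • b₁, ?_⟩
          rw [map_smul, map_smul]
          simp [inv_mul_cancel₀ hb₁]
        have hb₀1 : (ψ.comp β) b₀ = 1 := by
          rw [hσT]
          simpa using hb₀ hex
        have hsmul : ∀ b : B, dualAct B (ψ.comp β) b = (ψ.comp β) b • (ψ.comp β) := by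
          intro b
          ext b'
          rw [hdB]
          simp [hσmul]
        have hmBσ : mB (ψ.comp β) = 0 := by rw [hσT]; exact hmB0
        rw [hsmul ((e x).2), hsmul ((e x).2 * b₀), map_smul, map_smul, hmBσ]
        rw [hσmul ((e x).2) b₀, hb₀1]
        simp
      · -- σ ≠ φ∘T : use hmB
        have hσchar : IsChar B (ψ.comp β) := ⟨hσ0, hσmul⟩
        rw [hmB _ _ hσchar hσT, hmB _ _ hσchar hσT, hσmul ((e x).2) b₀]
        ring
    · -- ρ ≠ 0 : B-part dies, A-part is a character ≠ φ
      have hσ0 : ψ.comp β = 0 := by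
        obtain ⟨a₁, ha₁⟩ : ∃ a₁ : A, (ψ.comp α) a₁ ≠ 0 := by
          by_contra h
          push_neg at h
          exact hρ0 (by ext a; simpa using h a)
        ext b
        have h := hzero a₁ b
        rcases mul_eq_zero.mp h with h' | h'
        · exact absurd h' ha₁
        · simpa using h'
      have hρφ : ψ.comp α ≠ φ := by
        intro hρφ
        apply hψχ
        ext y
        rw [hψval y, hρφ, hσ0, hχ y]
        simp [map_add]
      have hρchar : IsChar A (ψ.comp α) := ⟨hρ0, hρmul⟩
      have hdB0 : ∀ b : B, dualAct B (0 : B →L[ℂ] ℂ) b = 0 := by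
        intro b; ext b'; simp [dualAct]
      rw [hσ0, hdB0]
      simp only [map_zero, ContinuousLinearMap.zero_apply]
      rw [hmA _ _ hρchar hρφ]
      simp [hdB0]
end

section
/- Let A be a Banach algebra and B an abstract Segal algebra with respect to A. If B is Δ-weak character amenable, then A is Δ-weak character amenable. -/
open Filter Topology

/-- `B` is an abstract Segal algebra with respect to `A`, with the inclusion map `j`. -/
structure IsAbstractSegalAlgebra
    (A : Type*) [NonUnitalNormedRing A] [NormedSpace ℂ A]
    [IsScalarTower ℂ A A] [SMulCommClass ℂ A A]
    (B : Type*) [NonUnitalNormedRing B] [NormedSpace ℂ B]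
    [IsScalarTower ℂ B B] [SMulCommClass ℂ B B]
    (j : B → A) : Prop where
  injective : Function.Injective j
  map_add : ∀ b b' : B, j (b + b') = j b + j b'
  map_smul : ∀ (c : ℂ) (b : B), j (c • b) = c • j b
  map_mul : ∀ b b' : B, j (b * b') = j b * j b'
  /-- `B` is dense in `A` -/
  dense : DenseRange j
  /-- `B` is a left ideal in `A` -/
  left_ideal : ∀ (a : A) (b : B), ∃ b' : B, j b' = a * j b
  /-- `‖b‖_A ≤ M ‖b‖_B` -/
  normA_le : ∃ M > (0 : ℝ), ∀ b : B, ‖j b‖ ≤ M * ‖b‖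
  /-- `‖a b‖_B ≤ C ‖a‖_A ‖b‖_B` for `a, b ∈ B` -/
  normB_mul_le : ∃ C > (0 : ℝ), ∀ b b' : B, ‖b * b'‖ ≤ C * ‖j b‖ * ‖b'‖

/-- if `B` is an abstract Segal algebra with respect to `A` and `B` is
Δ-weak character amenable, then so is `A`. -/
theorem deltaWeakCharAmenable_of_segal
    (A : Type*) [NonUnitalNormedRing A] [NormedSpace ℂ A]
    [IsScalarTower ℂ A A] [SMulCommClass ℂ A A] [CompleteSpace A]
    (B : Type*) [NonUnitalNormedRing B] [NormedSpace ℂ B]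
    [IsScalarTower ℂ B B] [SMulCommClass ℂ B B] [CompleteSpace B]
    (j : B → A) (hseg : IsAbstractSegalAlgebra A B j)
    (hB : DeltaWeakCharAmenable B) :
    DeltaWeakCharAmenable A := by
  classical
  obtain ⟨M, hM0, hM⟩ := hseg.normA_le
  let Jlin : B →ₗ[ℂ] A :=
    { toFun := j, map_add' := hseg.map_add, map_smul' := hseg.map_smul }
  let J : B →L[ℂ] A := Jlin.mkContinuousOfExistsBound ⟨M, fun b => hM b⟩
  have hJ : ∀ b, J b = j b := fun _ => rfl
  have hJfun : (⇑J : B → A) = j := rfl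
  have hdense : DenseRange (⇑J) := by rw [hJfun]; exact hseg.dense
  have hinj : ∀ ψ χ : A →L[ℂ] ℂ, ψ.comp J = χ.comp J → ψ = χ := by
    intro ψ χ h
    have h' : (⇑ψ) ∘ (⇑J) = (⇑χ) ∘ (⇑J) := by
      funext b
      exact congrFun (congrArg (fun f : B →L[ℂ] ℂ => (⇑f : B → ℂ)) h) b
    exact ContinuousLinearMap.ext fun a =>
      congrFun (hdense.equalizer ψ.continuous χ.continuous h') a
  have hchar : ∀ ψ : A →L[ℂ] ℂ, IsChar A ψ → IsChar B (ψ.comp J) := by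
    rintro ψ ⟨hne, hmul⟩
    constructor
    · intro h0
      apply hne
      apply hinj ψ 0
      rw [h0]; ext b; simp
    · intro b b'
      simp only [ContinuousLinearMap.comp_apply, hJ, hseg.map_mul, hmul]
  intro φ hφ
  have hφB : IsChar B (φ.comp J) ∨ φ.comp J = 0 := by
    rcases hφ with h | h
    · exact Or.inl (hchar φ h)
    · right; rw [h]; ext b; simp
  obtain ⟨m, hm0, hm⟩ := hB (φ.comp J) hφB
  have happly : ∀ f : A →L[ℂ] ℂ,
      ((ContinuousLinearMap.compL ℂ B A ℂ).flip J) f = f.comp J := fun _ => rfl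
  refine ⟨m.comp ((ContinuousLinearMap.compL ℂ B A ℂ).flip J), ?_, ?_⟩
  · simpa [happly φ] using hm0
  · intro a ψ hψ hψφ
    have hψB := hchar ψ hψ
    have hψφB : ψ.comp J ≠ φ.comp J := fun h => hψφ (hinj _ _ h)
    obtain ⟨b, hb⟩ : ∃ b : B, ψ.comp J b ≠ 0 := by
      by_contra h
      push_neg at h
      exact hψB.1 (by ext b; simpa using h b)
    have key : dualAct B (ψ.comp J) b = (ψ.comp J b) • (ψ.comp J) := by
      ext b'
      simp only [dualAct, ContinuousLinearMap.comp_apply,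
        ContinuousLinearMap.mul_apply', hJ, hseg.map_mul, hψ.2,
        ContinuousLinearMap.smul_apply, smul_eq_mul]
    have hm1 : m (ψ.comp J) = 1 := by
      have h2 := hm b (ψ.comp J) hψB hψφB
      rw [key, map_smul, smul_eq_mul] at h2
      have : ψ.comp J b * m (ψ.comp J) = ψ.comp J b * 1 := by
        rw [mul_one]; exact h2
      exact mul_left_cancel₀ hb this
    have key2 : (dualAct A ψ a).comp J = (ψ a) • (ψ.comp J) := by
      ext b'
      simp only [dualAct, ContinuousLinearMap.comp_apply,
        ContinuousLinearMap.mul_apply', hJ, hψ.2,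
        ContinuousLinearMap.smul_apply, smul_eq_mul]
    rw [ContinuousLinearMap.comp_apply, happly, key2, map_smul, smul_eq_mul,
      hm1, mul_one]
end

section
/- Let A be a Banach algebra and B an abstract Segal algebra with respect to A such that B² is dense in B and B has a bounded approximate identity. If A is Δ-weak character amenable, then B is Δ-weak character amenable. -/
open Filter Topology

universe u v

set_option linter.unusedSectionVars false

namespace SegalAux

variable {A : Type u} [NonUnitalNormedRing A] [NormedSpace ℂ A]
  [IsScalarTower ℂ A A] [SMulCommClass ℂ A A]
  {B : Type v} [NonUnitalNormedRing B] [NormedSpace ℂ B]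
  [IsScalarTower ℂ B B] [SMulCommClass ℂ B B]
  {j : B → A}

/-- The module action of `A` on `B`. -/
noncomputable def act (hseg : IsAbstractSegalAlgebra A B j) (a : A) (b : B) : B :=
  (hseg.left_ideal a b).choose

lemma j_act (hseg : IsAbstractSegalAlgebra A B j) (a : A) (b : B) :
    j (act hseg a b) = a * j b :=
  (hseg.left_ideal a b).choose_spec

/-- `j` as a continuous linear map. -/
noncomputable def jL (hseg : IsAbstractSegalAlgebra A B j) : B →L[ℂ] A :=
  LinearMap.mkContinuous
    { toFun := j
      map_add' := hseg.map_add
      map_smul' := fun c b => by simpa using hseg.map_smul c b }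
    hseg.normA_le.choose
    (fun b => hseg.normA_le.choose_spec.2 b)

@[simp] lemma jL_apply (hseg : IsAbstractSegalAlgebra A B j) (b : B) : jL hseg b = j b := rfl

noncomputable def cC (hseg : IsAbstractSegalAlgebra A B j) : ℝ := hseg.normB_mul_le.choose

lemma cC_pos (hseg : IsAbstractSegalAlgebra A B j) : 0 < cC hseg :=
  hseg.normB_mul_le.choose_spec.1

lemma cC_spec (hseg : IsAbstractSegalAlgebra A B j) (b b' : B) :
    ‖b * b'‖ ≤ cC hseg * ‖j b‖ * ‖b'‖ :=
  hseg.normB_mul_le.choose_spec.2 b b'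

lemma act_j (hseg : IsAbstractSegalAlgebra A B j) (b c : B) :
    act hseg (j b) c = b * c :=
  hseg.injective (by rw [j_act hseg, hseg.map_mul])

lemma act_add (hseg : IsAbstractSegalAlgebra A B j) (a a' : A) (b : B) :
    act hseg (a + a') b = act hseg a b + act hseg a' b :=
  hseg.injective (by rw [j_act hseg, hseg.map_add, j_act hseg, j_act hseg, add_mul])

lemma act_smul (hseg : IsAbstractSegalAlgebra A B j) (c : ℂ) (a : A) (b : B) :
    act hseg (c • a) b = c • act hseg a b :=
  hseg.injective (by rw [j_act hseg, hseg.map_smul, j_act hseg, smul_mul_assoc])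

lemma act_mul (hseg : IsAbstractSegalAlgebra A B j) (a a' : A) (b : B) :
    act hseg (a * a') b = act hseg a (act hseg a' b) :=
  hseg.injective (by rw [j_act hseg, j_act hseg, j_act hseg, mul_assoc])

lemma act_norm (hseg : IsAbstractSegalAlgebra A B j) [CompleteSpace B] (a : A) (b : B) :
    ‖act hseg a b‖ ≤ cC hseg * ‖a‖ * ‖b‖ := by
  obtain ⟨x, hx_mem, hx⟩ := mem_closure_iff_seq_limit.1 (hseg.dense a)
  choose bn hbn using hx_mem
  have hC := cC_pos hseg
  have hxc : CauchySeq x := hx.cauchySeq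
  have hcauchy : CauchySeq (fun n => bn n * b) := by
    rw [Metric.cauchySeq_iff] at hxc ⊢
    intro ε hε
    have hδ : 0 < ε / (cC hseg * ‖b‖ + 1) := div_pos hε (by positivity)
    obtain ⟨N, hN⟩ := hxc _ hδ
    refine ⟨N, fun n hn m hm => ?_⟩
    have h1 : dist (bn n * b) (bn m * b) ≤ cC hseg * ‖b‖ * dist (x n) (x m) := by
      rw [dist_eq_norm, dist_eq_norm]
      calc ‖bn n * b - bn m * b‖ = ‖(bn n - bn m) * b‖ := by rw [sub_mul]
        _ ≤ cC hseg * ‖j (bn n - bn m)‖ * ‖b‖ := cC_spec hseg _ _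
        _ = cC hseg * ‖b‖ * ‖x n - x m‖ := by
            have : j (bn n - bn m) = x n - x m := by
              have := map_sub (jL hseg) (bn n) (bn m)
              simpa [hbn] using this
            rw [this]; ring
    have h2 : cC hseg * ‖b‖ * dist (x n) (x m) ≤
        cC hseg * ‖b‖ * (ε / (cC hseg * ‖b‖ + 1)) :=
      mul_le_mul_of_nonneg_left (hN n hn m hm).le (by positivity)
    have h3 : cC hseg * ‖b‖ * (ε / (cC hseg * ‖b‖ + 1)) < ε := by
      have hlt : cC hseg * ‖b‖ * (ε / (cC hseg * ‖b‖ + 1)) <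
          (cC hseg * ‖b‖ + 1) * (ε / (cC hseg * ‖b‖ + 1)) :=
        mul_lt_mul_of_pos_right (lt_add_one _) hδ
      have heq : (cC hseg * ‖b‖ + 1) * (ε / (cC hseg * ‖b‖ + 1)) = ε := by
        field_simp
      linarith
    exact lt_of_le_of_lt (h1.trans h2) h3
  obtain ⟨c, hc⟩ := cauchySeq_tendsto_of_complete hcauchy
  have hjc : Tendsto (fun n => j (bn n * b)) atTop (𝓝 (j c)) :=
    ((jL hseg).continuous.tendsto c).comp hc
  have hjc' : Tendsto (fun n => j (bn n * b)) atTop (𝓝 (a * j b)) := by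
    have heq : (fun n => j (bn n * b)) = fun n => x n * j b := by
      funext n; rw [hseg.map_mul, hbn]
    rw [heq]
    exact hx.mul tendsto_const_nhds
  have hcab : c = act hseg a b :=
    hseg.injective (by rw [j_act hseg]; exact tendsto_nhds_unique hjc hjc')
  rw [← hcab]
  refine le_of_tendsto_of_tendsto' hc.norm (((hx.norm).const_mul (cC hseg)).mul_const ‖b‖)
    (fun n => ?_)
  calc ‖bn n * b‖ ≤ cC hseg * ‖j (bn n)‖ * ‖b‖ := cC_spec hseg _ _
    _ = cC hseg * ‖x n‖ * ‖b‖ := by rw [hbn]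

/-- `b ↦ (a ↦ a • b)` as a continuous linear map. -/
noncomputable def actR (hseg : IsAbstractSegalAlgebra A B j) [CompleteSpace B] (b : B) :
    A →L[ℂ] B :=
  LinearMap.mkContinuous
    { toFun := fun a => act hseg a b
      map_add' := fun a a' => act_add hseg a a' b
      map_smul' := fun c a => by simpa using act_smul hseg c a b }
    (cC hseg * ‖b‖)
    (fun a => (act_norm hseg a b).trans_eq (by ring))

@[simp] lemma actR_apply (hseg : IsAbstractSegalAlgebra A B j) [CompleteSpace B] (b : B)
    (a : A) : actR hseg b a = act hseg a b := rfl

lemma exists_char (ψ : B →L[ℂ] ℂ) (hψ : IsChar B ψ) : ∃ b, ψ b ≠ 0 := by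
  by_contra h
  push_neg at h
  exact hψ.1 (ContinuousLinearMap.ext fun b => by simp [h b])

/-- Every character of `B` extends to a character of `A`. -/
lemma exists_ext (hseg : IsAbstractSegalAlgebra A B j) [CompleteSpace B]
    {φ : B →L[ℂ] ℂ} (hφ : IsChar B φ) :
    ∃ φ' : A →L[ℂ] ℂ, IsChar A φ' ∧ (∀ b, φ' (j b) = φ b) ∧
      ∀ a c, φ (act hseg a c) = φ' a * φ c := by
  obtain ⟨b1, hb1⟩ := exists_char φ hφ
  set b₀ : B := (φ b1)⁻¹ • b1 with hb₀
  have hφb₀ : φ b₀ = 1 := by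
    simp [hb₀, inv_mul_cancel₀ hb1]
  have happ : ∀ a, (φ.comp (actR hseg b₀)) a = φ (act hseg a b₀) := fun a => rfl
  have hkey : ∀ (c : B) (a : A), φ (act hseg a c) = φ (act hseg a b₀) * φ c := by
    intro c a
    refine DenseRange.induction_on hseg.dense a ?_ ?_
    · exact isClosed_eq ((φ.comp (actR hseg c)).continuous)
        (((φ.comp (actR hseg b₀)).continuous).mul continuous_const)
    · intro b
      show φ (act hseg (j b) c) = φ (act hseg (j b) b₀) * φ c
      rw [act_j hseg, act_j hseg, hφ.2, hφ.2, hφb₀, mul_one]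
  have hj : ∀ b, (φ.comp (actR hseg b₀)) (j b) = φ b := by
    intro b
    rw [happ, act_j hseg, hφ.2, hφb₀, mul_one]
  refine ⟨φ.comp (actR hseg b₀), ⟨?_, ?_⟩, hj, fun a c => ?_⟩
  · intro h0
    have h1 : (φ.comp (actR hseg b₀)) (j b₀) = 0 := by rw [h0]; rfl
    rw [hj b₀, hφb₀] at h1
    exact one_ne_zero h1
  · intro a a'
    rw [happ, happ, happ, act_mul hseg]
    exact hkey (act hseg a' b₀) a
  · rw [happ]
    exact hkey c a

end SegalAux

theorem segal_deltaWeakCharAmenable'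
    (A : Type u) [NonUnitalNormedRing A] [NormedSpace ℂ A]
    [IsScalarTower ℂ A A] [SMulCommClass ℂ A A] [CompleteSpace A]
    (B : Type v) [NonUnitalNormedRing B] [NormedSpace ℂ B]
    [IsScalarTower ℂ B B] [SMulCommClass ℂ B B] [CompleteSpace B]
    (j : B → A) (hseg : IsAbstractSegalAlgebra A B j)
    (hbai : ∃ (κ : Type v) (lκ : Filter κ), lκ.NeBot ∧ ∃ u : κ → B,
      (∃ M : ℝ, ∀ i, ‖u i‖ ≤ M) ∧
      ∀ b : B, Tendsto (fun i => ‖b * u i - b‖) lκ (𝓝 0) ∧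
        Tendsto (fun i => ‖u i * b - b‖) lκ (𝓝 0))
    (hA : ∀ φ : A →L[ℂ] ℂ, (IsChar A φ ∨ φ = 0) → ∃ m : (A →L[ℂ] ℂ) →L[ℂ] ℂ, m φ = 0 ∧
      ∀ (a : A) (ψ : A →L[ℂ] ℂ), IsChar A ψ → ψ ≠ φ → m (dualAct A ψ a) = ψ a) :
    ∀ φ : B →L[ℂ] ℂ, (IsChar B φ ∨ φ = 0) → ∃ m : (B →L[ℂ] ℂ) →L[ℂ] ℂ, m φ = 0 ∧
      ∀ (b : B) (ψ : B →L[ℂ] ℂ), IsChar B ψ → ψ ≠ φ → m (dualAct B ψ b) = ψ b := by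
  intro φ hφcase
  obtain ⟨κ, lκ, hne, u, ⟨Mu, hMu⟩, hu⟩ := hbai
  haveI := hne
  obtain ⟨i0⟩ : Nonempty κ := Filter.nonempty_of_neBot lκ
  have hMu0 : 0 ≤ Mu := (norm_nonneg (u i0)).trans (hMu i0)
  set U := Ultrafilter.of lκ with hU
  have hUle : ↑U ≤ lκ := Ultrafilter.of_le lκ
  have hlim : ∀ (g : κ → ℂ) (R : ℝ), (∀ i, ‖g i‖ ≤ R) → ∃ z, Tendsto g ↑U (𝓝 z) := by
    intro g R hg
    obtain ⟨z, -, hz⟩ := (isCompact_closedBall (0 : ℂ) R).ultrafilter_le_nhds (U.map g)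
      (le_principal_iff.2 (by
        rw [Ultrafilter.coe_map, mem_map]
        exact univ_mem' fun i => mem_closedBall_zero_iff.2 (hg i)))
    exact ⟨z, hz⟩
  have hC := SegalAux.cC_pos hseg
  have char_lim : ∀ ψ : B →L[ℂ] ℂ, IsChar B ψ → Tendsto (fun i => ψ (u i)) lκ (𝓝 1) := by
    intro ψ hψ
    obtain ⟨c, hc⟩ := SegalAux.exists_char ψ hψ
    have h0 : Tendsto (fun i => c * u i) lκ (𝓝 c) := by
      rw [tendsto_iff_norm_sub_tendsto_zero]
      exact (hu c).1
    have h1 : Tendsto (fun i => ψ (c * u i)) lκ (𝓝 (ψ c)) := (ψ.continuous.tendsto c).comp h0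
    simp only [hψ.2 c] at h1
    have h2 := h1.const_mul (ψ c)⁻¹
    simp only [← mul_assoc, inv_mul_cancel₀ hc, one_mul] at h2
    simpa using h2
  rcases hφcase with hφ | rfl
  · -- φ is a character
    obtain ⟨φ', hφ'char, hφ'j, hφ'key⟩ := SegalAux.exists_ext hseg hφ
    obtain ⟨n, hn0, hn⟩ := hA φ' (Or.inl hφ'char)
    have hn1 : ∀ χ : A →L[ℂ] ℂ, IsChar A χ → χ ≠ φ' → n χ = 1 := by
      intro χ hχ hne'
      obtain ⟨a, ha⟩ := SegalAux.exists_char χ hχ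
      have hd : dualAct A χ a = χ a • χ := by
        ext b
        simp [dualAct, ContinuousLinearMap.mul_apply', hχ.2]
      have h := hn a χ hχ hne'
      rw [hd, map_smul, smul_eq_mul] at h
      exact mul_left_cancel₀ ha (h.trans (mul_one _).symm)
    have hptbd : ∀ (f : B →L[ℂ] ℂ) (a : A) (i : κ),
        ‖f (SegalAux.act hseg a (u i))‖ ≤ SegalAux.cC hseg * Mu * ‖f‖ * ‖a‖ := by
      intro f a i
      have h4 : ‖SegalAux.act hseg a (u i)‖ ≤ SegalAux.cC hseg * ‖a‖ * Mu :=
        (SegalAux.act_norm hseg a (u i)).trans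
          (mul_le_mul_of_nonneg_left (hMu i) (mul_nonneg hC.le (norm_nonneg a)))
      calc ‖f (SegalAux.act hseg a (u i))‖ ≤ ‖f‖ * (SegalAux.cC hseg * ‖a‖ * Mu) :=
            (f.le_opNorm _).trans (mul_le_mul_of_nonneg_left h4 (norm_nonneg f))
        _ = SegalAux.cC hseg * Mu * ‖f‖ * ‖a‖ := by ring
    have hTex : ∀ (f : B →L[ℂ] ℂ) (a : A),
        ∃ z, Tendsto (fun i => f (SegalAux.act hseg a (u i))) ↑U (𝓝 z) :=
      fun f a => hlim _ _ (hptbd f a)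
    set Tin : (B →L[ℂ] ℂ) → A → ℂ :=
      fun f a => limUnder ↑U (fun i => f (SegalAux.act hseg a (u i))) with hTin_def
    have hTin : ∀ f a, Tendsto (fun i => f (SegalAux.act hseg a (u i))) ↑U (𝓝 (Tin f a)) :=
      fun f a => tendsto_nhds_limUnder (hTex f a)
    have hTbd : ∀ f a, ‖Tin f a‖ ≤ SegalAux.cC hseg * Mu * ‖f‖ * ‖a‖ := fun f a =>
      le_of_tendsto (hTin f a).norm (Eventually.of_forall fun i => hptbd f a i)
    let T1 : (B →L[ℂ] ℂ) → (A →L[ℂ] ℂ) := fun f =>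
      LinearMap.mkContinuous
        { toFun := Tin f
          map_add' := fun a a' => tendsto_nhds_unique (hTin f (a + a'))
            (by simpa only [SegalAux.act_add hseg, map_add] using (hTin f a).add (hTin f a'))
          map_smul' := fun c a => tendsto_nhds_unique (hTin f (c • a))
            (by simpa only [SegalAux.act_smul hseg, map_smul, smul_eq_mul, RingHom.id_apply]
              using (hTin f a).const_mul c) }
        (SegalAux.cC hseg * Mu * ‖f‖)
        (fun a => hTbd f a)
    have hT1app : ∀ f a, T1 f a = Tin f a := fun _ _ => rfl
    let T : (B →L[ℂ] ℂ) →L[ℂ] (A →L[ℂ] ℂ) :=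
      LinearMap.mkContinuous
        { toFun := T1
          map_add' := fun f g => ContinuousLinearMap.ext fun a => tendsto_nhds_unique
            (hTin (f + g) a)
            (by simpa only [ContinuousLinearMap.add_apply, hT1app] using (hTin f a).add (hTin g a))
          map_smul' := fun c f => ContinuousLinearMap.ext fun a => tendsto_nhds_unique
            (hTin (c • f) a)
            (by simpa only [ContinuousLinearMap.coe_smul', Pi.smul_apply, smul_eq_mul,
              RingHom.id_apply, hT1app] using (hTin f a).const_mul c) }
        (SegalAux.cC hseg * Mu)
        (fun f => ContinuousLinearMap.opNorm_le_bound _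
          (mul_nonneg (mul_nonneg hC.le hMu0) (norm_nonneg f)) (fun a => hTbd f a))
    have hTchar : ∀ (ψ : B →L[ℂ] ℂ) (ψ' : A →L[ℂ] ℂ), IsChar B ψ →
        (∀ a c, ψ (SegalAux.act hseg a c) = ψ' a * ψ c) → T ψ = ψ' := by
      intro ψ ψ' hψ hkey
      refine ContinuousLinearMap.ext fun a => ?_
      have h2 : Tendsto (fun i => ψ (SegalAux.act hseg a (u i))) ↑U (𝓝 (ψ' a)) := by
        have h3 := ((char_lim ψ hψ).mono_left hUle).const_mul (ψ' a)
        rw [mul_one] at h3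
        simpa only [hkey] using h3
      exact tendsto_nhds_unique (hTin ψ a) h2
    refine ⟨n.comp T, ?_, ?_⟩
    · rw [ContinuousLinearMap.comp_apply, hTchar φ φ' hφ hφ'key, hn0]
    · intro b ψ hψ hψne
      obtain ⟨ψ', hψ'char, hψ'j, hψ'key⟩ := SegalAux.exists_ext hseg hψ
      have hdA : dualAct B ψ b = ψ b • ψ := by
        ext c
        simp [dualAct, ContinuousLinearMap.mul_apply', hψ.2]
      have hne' : ψ' ≠ φ' := by
        intro h
        apply hψne
        refine ContinuousLinearMap.ext fun c => ?_
        rw [← hψ'j c, h, hφ'j c]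
      rw [ContinuousLinearMap.comp_apply, hdA, map_smul, hTchar ψ ψ' hψ hψ'key, map_smul,
        smul_eq_mul, hn1 ψ' hψ'char hne', mul_one]
  · -- φ = 0
    have hM0ex : ∀ f : B →L[ℂ] ℂ, ∃ z, Tendsto (fun i => f (u i)) ↑U (𝓝 z) := by
      intro f
      refine hlim _ (‖f‖ * Mu) fun i => ?_
      exact (f.le_opNorm (u i)).trans (mul_le_mul_of_nonneg_left (hMu i) (norm_nonneg f))
    set M0 : (B →L[ℂ] ℂ) → ℂ := fun f => limUnder ↑U (fun i => f (u i)) with hM0def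
    have hM0 : ∀ f, Tendsto (fun i => f (u i)) ↑U (𝓝 (M0 f)) :=
      fun f => tendsto_nhds_limUnder (hM0ex f)
    let m : (B →L[ℂ] ℂ) →L[ℂ] ℂ :=
      LinearMap.mkContinuous
        { toFun := M0
          map_add' := fun f g => tendsto_nhds_unique (hM0 (f + g))
            (by simpa only [ContinuousLinearMap.add_apply] using (hM0 f).add (hM0 g))
          map_smul' := fun c f => tendsto_nhds_unique (hM0 (c • f))
            (by simpa only [ContinuousLinearMap.coe_smul', Pi.smul_apply, smul_eq_mul,
              RingHom.id_apply] using (hM0 f).const_mul c) }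
        Mu
        (fun f => by
          rw [mul_comm]
          exact le_of_tendsto (hM0 f).norm (Eventually.of_forall fun i =>
            (f.le_opNorm (u i)).trans (mul_le_mul_of_nonneg_left (hMu i) (norm_nonneg f))))
    refine ⟨m, map_zero m, ?_⟩
    intro b ψ hψ hψne
    have h2 : Tendsto (fun i => (dualAct B ψ b) (u i)) ↑U (𝓝 (ψ b)) := by
      have h0 : Tendsto (fun i => b * u i) lκ (𝓝 b) := by
        rw [tendsto_iff_norm_sub_tendsto_zero]
        exact (hu b).1
      have h1 : Tendsto (fun i => ψ (b * u i)) ↑U (𝓝 (ψ b)) :=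
        ((ψ.continuous.tendsto b).comp h0).mono_left hUle
      simpa only [dualAct, ContinuousLinearMap.comp_apply, ContinuousLinearMap.mul_apply']
        using h1
    exact tendsto_nhds_unique (hM0 (dualAct B ψ b)) h2

/-- if `B` is an abstract Segal algebra with respect to `A` such that `B²`
is dense in `B` and `B` has a bounded approximate identity, then Δ-weak character
amenability of `A` implies that of `B`. -/
theorem segal_deltaWeakCharAmenable
    (A : Type u) [NonUnitalNormedRing A] [NormedSpace ℂ A]
    [IsScalarTower ℂ A A] [SMulCommClass ℂ A A] [CompleteSpace A]
    (B : Type v) [NonUnitalNormedRing B] [NormedSpace ℂ B]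
    [IsScalarTower ℂ B B] [SMulCommClass ℂ B B] [CompleteSpace B]
    (j : B → A) (hseg : IsAbstractSegalAlgebra A B j)
    (hB2 : Dense ((Submodule.span ℂ {x : B | ∃ b b' : B, b * b' = x} : Submodule ℂ B) : Set B))
    (hbai : ∃ (κ : Type v) (lκ : Filter κ), lκ.NeBot ∧ ∃ u : κ → B,
      (∃ M : ℝ, ∀ i, ‖u i‖ ≤ M) ∧
      ∀ b : B, Tendsto (fun i => ‖b * u i - b‖) lκ (𝓝 0) ∧
        Tendsto (fun i => ‖u i * b - b‖) lκ (𝓝 0))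
    (hA : DeltaWeakCharAmenable A) :
    DeltaWeakCharAmenable B :=
  segal_deltaWeakCharAmenable' A B j hseg hbai hA
end

section
/- Let A be a Banach algebra and X a Banach A-bimodule. If A is Δ-weak character amenable, then the module extension Banach algebra A⊕₁X is Δ-weak character amenable. (In particular, if (a_α) ⊆ ker φ is a bounded net with ψ(a a_α) → ψ(a) for all a ∈ A and ψ ∈ Δ(A)\{φ}, then ((a_α, 0)) is a bounded Δ-weak approximate identity for A⊕₁X in ker φ̃.) -/
open Filter Topology

/-- `X`, with left action `sl` and right action `sr`, is a Banach `A`-bimodule. -/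
structure IsBanachBimodule
    (A : Type*) [NonUnitalNormedRing A] [NormedSpace ℂ A]
    [IsScalarTower ℂ A A] [SMulCommClass ℂ A A]
    (X : Type*) [NormedAddCommGroup X] [NormedSpace ℂ X]
    (sl : A → X → X) (sr : X → A → X) : Prop where
  sl_add_left : ∀ (a a' : A) (x : X), sl (a + a') x = sl a x + sl a' x
  sl_add_right : ∀ (a : A) (x x' : X), sl a (x + x') = sl a x + sl a x'
  sl_smul_left : ∀ (c : ℂ) (a : A) (x : X), sl (c • a) x = c • sl a x
  sl_smul_right : ∀ (c : ℂ) (a : A) (x : X), sl a (c • x) = c • sl a x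
  sr_add_left : ∀ (x x' : X) (a : A), sr (x + x') a = sr x a + sr x' a
  sr_add_right : ∀ (x : X) (a a' : A), sr x (a + a') = sr x a + sr x a'
  sr_smul_left : ∀ (c : ℂ) (x : X) (a : A), sr (c • x) a = c • sr x a
  sr_smul_right : ∀ (c : ℂ) (x : X) (a : A), sr x (c • a) = c • sr x a
  sl_mul : ∀ (a a' : A) (x : X), sl (a * a') x = sl a (sl a' x)
  sr_mul : ∀ (x : X) (a a' : A), sr x (a * a') = sr (sr x a) a'
  sl_sr : ∀ (a : A) (x : X) (a' : A), sl a (sr x a') = sr (sl a x) a'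
  norm_sl_le : ∀ (a : A) (x : X), ‖sl a x‖ ≤ ‖a‖ * ‖x‖
  norm_sr_le : ∀ (x : X) (a : A), ‖sr x a‖ ≤ ‖x‖ * ‖a‖

/-- `L`, together with the linear identification `e : L ≃ A × X`, is (a realization of)
the module extension Banach algebra `A ⊕₁ X`: the norm is `‖(a,x)‖ = ‖a‖ + ‖x‖` and the
multiplication is `(a,x)(a',x') = (aa', a·x' + x·a')`. -/
structure IsModuleExtension
    (A : Type*) [NonUnitalNormedRing A] [NormedSpace ℂ A]
    [IsScalarTower ℂ A A] [SMulCommClass ℂ A A]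
    (X : Type*) [NormedAddCommGroup X] [NormedSpace ℂ X]
    (L : Type*) [NonUnitalNormedRing L] [NormedSpace ℂ L]
    [IsScalarTower ℂ L L] [SMulCommClass ℂ L L]
    (sl : A → X → X) (sr : X → A → X) (e : L ≃ₗ[ℂ] A × X) : Prop where
  norm_eq : ∀ y : L, ‖y‖ = ‖(e y).1‖ + ‖(e y).2‖
  mul_eq : ∀ y y' : L,
    e (y * y') = ((e y).1 * (e y').1, sl ((e y).1) ((e y').2) + sr ((e y).2) ((e y').1))

/-- if `A` is Δ-weak character amenable, then so is the module extension
Banach algebra `A ⊕₁ X`. -/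
theorem moduleExtension_deltaWeakCharAmenable
    (A : Type*) [NonUnitalNormedRing A] [NormedSpace ℂ A]
    [IsScalarTower ℂ A A] [SMulCommClass ℂ A A] [CompleteSpace A]
    (X : Type*) [NormedAddCommGroup X] [NormedSpace ℂ X] [CompleteSpace X]
    (L : Type*) [NonUnitalNormedRing L] [NormedSpace ℂ L]
    [IsScalarTower ℂ L L] [SMulCommClass ℂ L L] [CompleteSpace L]
    (sl : A → X → X) (sr : X → A → X) (hbi : IsBanachBimodule A X sl sr)
    (e : L ≃ₗ[ℂ] A × X) (hext : IsModuleExtension A X L sl sr e)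
    (hA : DeltaWeakCharAmenable A) :
    DeltaWeakCharAmenable L := by
  intro Φ hΦ
  -- zero-action facts
  have sl0 : ∀ x : X, sl 0 x = 0 := fun x => by
    have h := hbi.sl_smul_left 0 0 x; simpa using h
  have sr0 : ∀ x : X, sr x 0 = 0 := fun x => by
    have h := hbi.sr_smul_right 0 x 0; simpa using h
  have sl0' : ∀ a : A, sl a 0 = 0 := fun a => by
    have h := hbi.sl_smul_right 0 a 0; simpa using h
  have sr0' : ∀ a : A, sr (0 : X) a = 0 := fun a => by
    have h := hbi.sr_smul_left 0 0 a; simpa using h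
  -- the embedding j : A →L[ℂ] L, a ↦ e.symm (a, 0)
  have hjnorm : ∀ a : A, ‖e.symm (a, (0 : X))‖ = ‖a‖ := fun a => by
    rw [hext.norm_eq]; simp
  let j : A →L[ℂ] L :=
    (e.symm.toLinearMap.comp (LinearMap.inl ℂ A X)).mkContinuous 1 (fun a => by
      show ‖e.symm (a, (0 : X))‖ ≤ 1 * ‖a‖
      rw [hjnorm]; simp)
  have hj : ∀ a : A, j a = e.symm (a, 0) := fun a => rfl
  have hej : ∀ a : A, e (j a) = (a, 0) := fun a => by rw [hj]; exact e.apply_symm_apply _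
  have hjmul : ∀ a b : A, j a * j b = j (a * b) := fun a b => by
    apply e.injective
    rw [hext.mul_eq, hej, hej, hej]
    simp [sl0', sr0']
  have hdecomp : ∀ y : L, y = j ((e y).1) + e.symm (0, (e y).2) := fun y => by
    apply e.injective
    rw [map_add, hej, e.apply_symm_apply]
    simp [Prod.ext_iff]
  -- characters on L vanish on the X-part
  have hcharX : ∀ (Ψ : L →L[ℂ] ℂ), IsChar L Ψ → ∀ x : X, Ψ (e.symm (0, x)) = 0 := by
    intro Ψ hΨ x
    have hz : e.symm ((0 : A), x) * e.symm ((0 : A), x) = 0 := by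
      apply e.injective
      rw [hext.mul_eq, e.apply_symm_apply, map_zero]
      simp [sl0, sr0]
    have h := hΨ.2 (e.symm ((0 : A), x)) (e.symm ((0 : A), x))
    rw [hz, map_zero] at h
    exact mul_self_eq_zero.mp h.symm
  -- characters on L factor through the A-part
  have hfact : ∀ (Ψ : L →L[ℂ] ℂ), IsChar L Ψ → ∀ y : L, Ψ y = Ψ (j ((e y).1)) := by
    intro Ψ hΨ y
    conv_lhs => rw [hdecomp y]
    rw [map_add, hcharX Ψ hΨ, add_zero]
  -- restriction of a character on L is a character on A
  have hψchar : ∀ (Ψ : L →L[ℂ] ℂ), IsChar L Ψ → IsChar A (Ψ.comp j) := by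
    intro Ψ hΨ
    constructor
    · intro h0
      apply hΨ.1
      ext y
      rw [ContinuousLinearMap.zero_apply, hfact Ψ hΨ y]
      have h : Ψ (j ((e y).1)) = (Ψ.comp j) ((e y).1) := rfl
      rw [h, h0, ContinuousLinearMap.zero_apply]
    · intro a b
      show Ψ (j (a * b)) = Ψ (j a) * Ψ (j b)
      rw [← hjmul, hΨ.2]
  -- the precomposition operator
  let P : (L →L[ℂ] ℂ) →L[ℂ] (A →L[ℂ] ℂ) := (ContinuousLinearMap.compL ℂ A L ℂ).flip j
  have hP : ∀ F : L →L[ℂ] ℂ, P F = F.comp j := fun F => rfl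
  have hφ : IsChar A (Φ.comp j) ∨ Φ.comp j = 0 := by
    rcases hΦ with hΦc | rfl
    · exact Or.inl (hψchar Φ hΦc)
    · exact Or.inr (ContinuousLinearMap.zero_comp j)
  obtain ⟨mA, hmA0, hmA⟩ := hA (Φ.comp j) hφ
  refine ⟨mA.comp P, ?_, ?_⟩
  · show mA (P Φ) = 0
    rw [hP]; exact hmA0
  · intro y Ψ hΨ hne
    show mA (P (dualAct L Ψ y)) = Ψ y
    have hψ := hψchar Ψ hΨ
    have hkey : P (dualAct L Ψ y) = dualAct A (Ψ.comp j) ((e y).1) := by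
      rw [hP]
      ext b
      show Ψ (y * j b) = Ψ (j ((e y).1 * b))
      have h1 : y * j b = j ((e y).1 * b) + e.symm (0, sr ((e y).2) b) := by
        apply e.injective
        rw [map_add, hext.mul_eq, hej, e.apply_symm_apply, hej]
        simp [sl0', Prod.ext_iff]
      rw [h1, map_add, hcharX Ψ hΨ, add_zero]
    have hneq : Ψ.comp j ≠ Φ.comp j := by
      intro hcontra
      rcases hΦ with hΦc | rfl
      · apply hne
        ext y'
        rw [hfact Ψ hΨ y', hfact Φ hΦc y']
        have h : Ψ (j ((e y').1)) = (Ψ.comp j) ((e y').1) := rfl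
        rw [h, hcontra]; rfl
      · exact hψ.1 (by rw [hcontra]; exact ContinuousLinearMap.zero_comp j)
    rw [hkey, hmA ((e y).1) (Ψ.comp j) hψ hneq]
    exact (hfact Ψ hΨ y).symm
end

section
/- Let A be a Banach algebra and X a Banach A-bimodule. If the module extension Banach algebra A⊕₁X is Δ-weak character amenable, then A is Δ-weak character amenable. -/
open Filter Topology

/-- if the module extension Banach algebra `A ⊕₁ X` is Δ-weak character
amenable, then so is `A`. -/
theorem deltaWeakCharAmenable_of_moduleExtension
    (A : Type*) [NonUnitalNormedRing A] [NormedSpace ℂ A]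
    [IsScalarTower ℂ A A] [SMulCommClass ℂ A A] [CompleteSpace A]
    (X : Type*) [NormedAddCommGroup X] [NormedSpace ℂ X] [CompleteSpace X]
    (L : Type*) [NonUnitalNormedRing L] [NormedSpace ℂ L]
    [IsScalarTower ℂ L L] [SMulCommClass ℂ L L] [CompleteSpace L]
    (sl : A → X → X) (sr : X → A → X) (hbi : IsBanachBimodule A X sl sr)
    (e : L ≃ₗ[ℂ] A × X) (hext : IsModuleExtension A X L sl sr e)
    (hL : DeltaWeakCharAmenable L) :
    DeltaWeakCharAmenable A := by
  -- the continuous projection `p : L →L A`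
  let p : L →L[ℂ] A :=
    LinearMap.mkContinuous ((LinearMap.fst ℂ A X).comp e.toLinearMap) 1 (by
      intro y
      simp only [LinearMap.comp_apply, LinearMap.fst_apply, LinearEquiv.coe_coe, one_mul]
      calc ‖(e y).1‖ ≤ ‖(e y).1‖ + ‖(e y).2‖ := le_add_of_nonneg_right (norm_nonneg _)
        _ = ‖y‖ := (hext.norm_eq y).symm)
  have hp : ∀ y : L, p y = (e y).1 := fun y => rfl
  -- the continuous inclusion `ι : A →L L`
  let ι : A →L[ℂ] L :=
    LinearMap.mkContinuous (e.symm.toLinearMap.comp (LinearMap.inl ℂ A X)) 1 (by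
      intro a
      simp only [LinearMap.comp_apply, LinearMap.inl_apply, LinearEquiv.coe_coe, one_mul]
      have := hext.norm_eq (e.symm (a, 0))
      rw [e.apply_symm_apply] at this
      simp only [this, norm_zero, add_zero]; rfl)
  have hι : ∀ a : A, ι a = e.symm (a, 0) := fun a => rfl
  have hpι : ∀ a : A, p (ι a) = a := by
    intro a; rw [hp, hι, e.apply_symm_apply]
  have hpmul : ∀ y y' : L, p (y * y') = p y * p y' := by
    intro y y'; rw [hp, hp, hp, hext.mul_eq]
  intro φ hφ
  -- lift `φ` to `L`
  have hφ' : IsChar L (φ.comp p) ∨ φ.comp p = 0 := by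
    rcases hφ with hφ | hφ
    · left
      constructor
      · intro h
        obtain ⟨a, ha⟩ : ∃ a, φ a ≠ 0 := by
          by_contra hc
          push_neg at hc
          exact hφ.1 (by ext a; simp [hc a])
        exact ha (by simpa [hpι a] using DFunLike.congr_fun h (ι a))
      · intro y y'
        simp [hpmul y y', hφ.2]
    · right; simp [hφ]
  obtain ⟨m, hm0, hm⟩ := hL (φ.comp p) hφ'
  refine ⟨m.comp ((ContinuousLinearMap.compL ℂ L A ℂ).flip p), by simpa using hm0, ?_⟩
  intro a ψ hψ hψφ
  have hψ' : IsChar L (ψ.comp p) := by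
    constructor
    · intro h
      obtain ⟨b, hb⟩ : ∃ b, ψ b ≠ 0 := by
        by_contra hc
        push_neg at hc
        exact hψ.1 (by ext b; simp [hc b])
      exact hb (by simpa [hpι b] using DFunLike.congr_fun h (ι b))
    · intro y y'
      simp [hpmul y y', hψ.2]
  have hne : ψ.comp p ≠ φ.comp p := by
    intro h
    apply hψφ
    ext b
    have := DFunLike.congr_fun h (ι b)
    simpa [hpι b] using this
  have key : (dualAct A ψ a).comp p = dualAct L (ψ.comp p) (ι a) := by
    ext y
    simp only [ContinuousLinearMap.comp_apply, dualAct, ContinuousLinearMap.mul_apply']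
    rw [hpmul, hpι]
  have := hm (ι a) (ψ.comp p) hψ' hne
  calc (m.comp ((ContinuousLinearMap.compL ℂ L A ℂ).flip p)) (dualAct A ψ a)
      = m ((dualAct A ψ a).comp p) := rfl
    _ = m (dualAct L (ψ.comp p) (ι a)) := by rw [key]
    _ = (ψ.comp p) (ι a) := this
    _ = ψ a := by rw [ContinuousLinearMap.comp_apply, hpι]
end

section
/- Let A and B be Banach algebras, and let (a_α) be a bounded net in A and (b_β) a bounded net in B such that φ'(c a_α) → φ'(c) for all c ∈ A, φ' ∈ Δ(A)\{φ}, and ψ'(d b_β) → ψ'(d) for all d ∈ B, ψ' ∈ Δ(B)\{ψ}. Then for every G ∈ A⊗̂B and all φ' ∈ Δ(A)\{φ}, ψ' ∈ Δ(B)\{ψ}, one has (φ'⊗ψ')(G·(a_α⊗b_β)) → (φ'⊗ψ')(G); that is, the net (a_α⊗b_β), indexed by pairs (α,β), is a bounded Δ-weak approximate identity for A⊗̂B relative to the characters φ'⊗ψ' with φ' ≠ φ and ψ' ≠ ψ. -/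
open Filter Topology

/-- if `(a_α)` and `(b_β)` are bounded nets in `A` and `B` with
`φ'(c a_α) → φ'(c)` for all `c ∈ A`, `φ' ∈ Δ(A) \ {φ}` and `ψ'(d b_β) → ψ'(d)` for all
`d ∈ B`, `ψ' ∈ Δ(B) \ {ψ}`, then for every `G ∈ A ⊗̂ B`,
`(φ'⊗ψ')(G · (a_α ⊗ b_β)) → (φ'⊗ψ')(G)` for all such `φ', ψ'`. -/
theorem projTensor_boundedDeltaWeakApproxId
    (A : Type*) [NonUnitalNormedRing A] [NormedSpace ℂ A]
    [IsScalarTower ℂ A A] [SMulCommClass ℂ A A] [CompleteSpace A]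
    (B : Type*) [NonUnitalNormedRing B] [NormedSpace ℂ B]
    [IsScalarTower ℂ B B] [SMulCommClass ℂ B B] [CompleteSpace B]
    (C : Type*) [NonUnitalNormedRing C] [NormedSpace ℂ C]
    [IsScalarTower ℂ C C] [SMulCommClass ℂ C C] [CompleteSpace C]
    (tmul : A → B → C)
    (tdual : (A →L[ℂ] ℂ) → (B →L[ℂ] ℂ) → (C →L[ℂ] ℂ))
    (hpt : IsProjTensor A B C tmul tdual)
    (φ : A →L[ℂ] ℂ) (ψ : B →L[ℂ] ℂ)
    {ι κ : Type*} (l : Filter ι) (l' : Filter κ) (hl : l.NeBot) (hl' : l'.NeBot)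
    (a : ι → A) (b : κ → B)
    (ha_bdd : ∃ M : ℝ, ∀ i, ‖a i‖ ≤ M) (hb_bdd : ∃ M : ℝ, ∀ i, ‖b i‖ ≤ M)
    (ha : ∀ (c : A) (φ' : A →L[ℂ] ℂ), IsChar A φ' → φ' ≠ φ →
      Tendsto (fun i => φ' (c * a i)) l (𝓝 (φ' c)))
    (hb : ∀ (d : B) (ψ' : B →L[ℂ] ℂ), IsChar B ψ' → ψ' ≠ ψ →
      Tendsto (fun i => ψ' (d * b i)) l' (𝓝 (ψ' d))) :
    ∀ (G : C) (φ' : A →L[ℂ] ℂ) (ψ' : B →L[ℂ] ℂ),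
      IsChar A φ' → IsChar B ψ' → φ' ≠ φ → ψ' ≠ ψ →
      Tendsto (fun p : ι × κ => tdual φ' ψ' (G * tmul (a p.1) (b p.2))) (l ×ˢ l')
        (𝓝 (tdual φ' ψ' G)) := by
  intro G φ' ψ' hφ' hψ' hne hne'
  -- tdual φ' ψ' is a character on C
  have hχ : IsChar C (tdual φ' ψ') :=
    (hpt.char_iff (tdual φ' ψ')).mpr ⟨φ', ψ', hφ', hψ', rfl⟩
  -- φ'(a i) → 1
  obtain ⟨c, hc⟩ : ∃ c : A, φ' c ≠ 0 := by
    by_contra h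
    push_neg at h
    exact hφ'.1 (ContinuousLinearMap.ext h)
  have hA : Tendsto (fun i => φ' (a i)) l (𝓝 1) := by
    have h1 := (ha c φ' hφ' hne).const_mul (φ' c)⁻¹
    have : (fun i => (φ' c)⁻¹ * φ' (c * a i)) = fun i => φ' (a i) := by
      funext i; rw [hφ'.2]; field_simp
    rw [this] at h1
    rwa [inv_mul_cancel₀ hc] at h1
  obtain ⟨d, hd⟩ : ∃ d : B, ψ' d ≠ 0 := by
    by_contra h
    push_neg at h
    exact hψ'.1 (ContinuousLinearMap.ext h)
  have hB : Tendsto (fun j => ψ' (b j)) l' (𝓝 1) := by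
    have h1 := (hb d ψ' hψ' hne').const_mul (ψ' d)⁻¹
    have : (fun j => (ψ' d)⁻¹ * ψ' (d * b j)) = fun j => ψ' (b j) := by
      funext j; rw [hψ'.2]; field_simp
    rw [this] at h1
    rwa [inv_mul_cancel₀ hd] at h1
  have key : ∀ p : ι × κ, tdual φ' ψ' (G * tmul (a p.1) (b p.2))
      = tdual φ' ψ' G * (φ' (a p.1) * ψ' (b p.2)) := by
    intro p
    rw [hχ.2, hpt.tdual_tmul]
  simp only [key]
  have := (Tendsto.const_mul (tdual φ' ψ' G)
    ((hA.comp tendsto_fst).mul (hB.comp tendsto_snd)))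
  simpa using this
end
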